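/- arXiv:2312.14855 — 10 statements merged into one kernel-verified Lean document; each statement's English description precedes it below -/
import Mathlib

section
/- For every fixed θ ∈ ℝ^N, the map F : ℝ^N → ℝ^N defined by F(x)_i = x_i + Σ_{j≠i} ψ_θ(x_i−x_j, θ_i−θ_j) is a C¹ diffeomorphism of ℝ^N onto ℝ^N: it is bijective, continuously differentiable, and its inverse is continuously differentiable. In particular, for every y ∈ ℝ^N the system of equations y_i = x_i + Σ_{j≠i} ψ_θ(x_i−x_j, θ_i−θ_j) (i = 1,…,N) has a unique solution x ∈ ℝ^N. -/
/-!
The interaction part of `F` is a monotone operator: `ψ_θ(·, t)` is nondecreasing because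
`∂ₓψ_θ = ψ_{xθ} ≥ 0` (mixed partials commute), and it is odd by the symmetry of `ψ`, so pairing
the `(i, j)` and `(j, i)` terms gives `⟪F x - F y, x - y⟫ ≥ ‖x - y‖²` for the Euclidean inner
product. Hence `F` is antilipschitz: it is injective and proper, so its range is closed, and its
derivative is injective, hence invertible, everywhere, so its range is open by the inverse
function theorem. Thus `F` is onto, and the inverse function theorem makes `F⁻¹` of class `C¹`.
-/

open Function Set Finset
open scoped NNReal RealInnerProductSpace

section Antilipschitz

variable {𝕜 E F : Type*} [NontriviallyNormedField 𝕜]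
  [NormedAddCommGroup E] [NormedSpace 𝕜 E] [NormedAddCommGroup F] [NormedSpace 𝕜 F]

theorem HasFDerivAt.norm_le_mul_norm_of_antilipschitzWith {f : E → F} {f' : E →L[𝕜] F} {x : E}
    {K : ℝ≥0} (hf : HasFDerivAt f f' x) (hK : AntilipschitzWith K f) (v : E) :
    ‖v‖ ≤ K * ‖f' v‖ := by
  have hline : HasDerivAt (fun s : 𝕜 => f (x + s • v)) (f' v) 0 := by
    have hc : HasDerivAt (fun s : 𝕜 => x + s • v) v 0 := by
      simpa using ((hasDerivAt_id (0 : 𝕜)).smul_const v).const_add x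
    exact hf.comp_hasDerivAt_of_eq (0 : 𝕜) hc (by simp)
  have hslope := (hasDerivAt_iff_tendsto_slope.1 hline).norm.const_mul (K : ℝ)
  refine ge_of_tendsto hslope (eventually_nhdsWithin_of_forall fun s (hs : s ≠ 0) => ?_)
  have h := hK.le_mul_dist (x + s • v) x
  rw [dist_eq_norm, dist_eq_norm, add_sub_cancel_left, norm_smul] at h
  rw [slope_def_module, norm_smul, norm_inv, sub_zero, zero_smul, add_zero,
    ← mul_assoc, mul_comm (K : ℝ), mul_assoc]
  rwa [le_inv_mul_iff₀ (norm_pos_iff.2 hs)]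

end Antilipschitz

section Diffeomorphism

variable {E : Type*} [NormedAddCommGroup E] [NormedSpace ℝ E] [FiniteDimensional ℝ E]
  {f : E → E} {K : ℝ≥0} {n : WithTop ℕ∞}

theorem AntilipschitzWith.exists_hasStrictFDerivAt_equiv (hK : AntilipschitzWith K f)
    (hf : ContDiff ℝ n f) (hn : n ≠ 0) (x : E) :
    ∃ e : E ≃L[ℝ] E, HasStrictFDerivAt f (e : E →L[ℝ] E) x := by
  have hstrict := (hf.contDiffAt (x := x)).hasStrictFDerivAt hn
  have hinj : Injective (fderiv ℝ f x : E →ₗ[ℝ] E) := fun v w hvw => by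
    have h := hstrict.hasFDerivAt.norm_le_mul_norm_of_antilipschitzWith hK (v - w)
    rw [map_sub, show fderiv ℝ f x v = fderiv ℝ f x w from hvw, sub_self, norm_zero, mul_zero,
      norm_le_zero_iff] at h
    exact sub_eq_zero.1 h
  exact ⟨(LinearEquiv.ofInjectiveEndo _ hinj).toContinuousLinearEquiv, hstrict⟩

theorem AntilipschitzWith.surjective_of_contDiff (hK : AntilipschitzWith K f)
    (hf : ContDiff ℝ n f) (hn : n ≠ 0) : Surjective f := by
  choose e he using hK.exists_hasStrictFDerivAt_equiv hf hn
  have hopen : IsOpen (range f) := (isOpenMap_of_hasStrictFDerivAt_equiv he).isOpen_range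
  have hproper : IsProperMap f := isProperMap_iff_tendsto_cocompact.2
    ⟨hf.continuous, by simpa only [Metric.cobounded_eq_cocompact] using hK.tendsto_cobounded⟩
  exact range_eq_univ.1 (IsClopen.eq_univ ⟨hproper.isClosed_range, hopen⟩ (range_nonempty f))

theorem AntilipschitzWith.bijective_and_contDiff_invFun (hK : AntilipschitzWith K f)
    (hf : ContDiff ℝ n f) (hn : n ≠ 0) : Bijective f ∧ ContDiff ℝ n (invFun f) := by
  have hbij : Bijective f := ⟨hK.injective, hK.surjective_of_contDiff hf hn⟩
  choose e he using hK.exists_hasStrictFDerivAt_equiv hf hn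
  let h : E ≃ₜ E := (Equiv.ofBijective f hbij).toHomeomorphOfContinuousOpen hf.continuous
    (isOpenMap_of_hasStrictFDerivAt_equiv he)
  have hinv : invFun f = h.symm := funext fun y =>
    hbij.1 <| (rightInverse_invFun hbij.2 y).trans (h.apply_symm_apply y).symm
  exact ⟨hbij, hinv ▸ h.contDiff_symm (fun x => (he x).hasFDerivAt) hf⟩

end Diffeomorphism

theorem antilipschitzWith_of_mul_norm_sq_le_inner {E : Type*} [NormedAddCommGroup E]
    [InnerProductSpace ℝ E] {f : E → E} {c : ℝ≥0} (hc : 0 < c)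
    (h : ∀ x y, c * ‖x - y‖ ^ 2 ≤ ⟪f x - f y, x - y⟫) : AntilipschitzWith c⁻¹ f := by
  refine AntilipschitzWith.of_le_mul_dist fun x y => ?_
  rw [dist_eq_norm, dist_eq_norm, NNReal.coe_inv, inv_mul_eq_div,
    le_div_iff₀' (NNReal.coe_pos.2 hc)]
  rcases (norm_nonneg (x - y)).eq_or_lt with hxy | hxy
  · rw [← hxy, mul_zero]; positivity
  · refine le_of_mul_le_mul_right ?_ hxy
    calc c * ‖x - y‖ * ‖x - y‖ = c * ‖x - y‖ ^ 2 := by ring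
      _ ≤ ⟪f x - f y, x - y⟫ := h x y
      _ ≤ ‖f x - f y‖ * ‖x - y‖ := real_inner_le_norm _ _

theorem exists_antilipschitzWith_of_sum_sq_le {ι : Type*} [Fintype ι] {f : (ι → ℝ) → ι → ℝ}
    (h : ∀ x y, ∑ i, (x i - y i) ^ 2 ≤ ∑ i, (f x i - f y i) * (x i - y i)) :
    ∃ K, AntilipschitzWith K f := by
  let g : EuclideanSpace ℝ ι → EuclideanSpace ℝ ι := fun u => WithLp.toLp 2 (f u.ofLp)
  have hg : AntilipschitzWith 1⁻¹ g := antilipschitzWith_of_mul_norm_sq_le_inner one_pos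
    fun u v => by
      simpa [g, EuclideanSpace.real_norm_sq_eq, PiLp.inner_apply, mul_comm] using h u.ofLp v.ofLp
  exact ⟨_, (PiLp.antilipschitzWith_ofLp 2 _).comp (hg.comp (PiLp.antilipschitzWith_toLp 2 _))⟩


section Slices

variable {𝕜 F : Type*} [NontriviallyNormedField 𝕜] [NormedAddCommGroup F] [NormedSpace 𝕜 F]
  {f : 𝕜 × 𝕜 → F} {L : 𝕜 × 𝕜 →L[𝕜] F} {a b : 𝕜}

theorem HasFDerivAt.hasDerivAt_fst_slice (h : HasFDerivAt f L (a, b)) :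
    HasDerivAt (fun x => f (x, b)) (L (1, 0)) a :=
  h.comp_hasDerivAt a ((hasDerivAt_id a).prodMk (hasDerivAt_const a b))

theorem HasFDerivAt.hasDerivAt_snd_slice (h : HasFDerivAt f L (a, b)) :
    HasDerivAt (fun y => f (a, y)) (L (0, 1)) b :=
  h.comp_hasDerivAt b ((hasDerivAt_const b a).prodMk (hasDerivAt_id b))

end Slices

section PartialDerivatives

variable {ψ ψx ψθ ψxθ : ℝ → ℝ → ℝ}

theorem uncurry_eq_fderiv_apply_fst (hψ : Differentiable ℝ (uncurry ψ))
    (hψx : ∀ x t, HasDerivAt (fun x' => ψ x' t) (ψx x t) x) :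
    uncurry ψx = fun q => fderiv ℝ (uncurry ψ) q (1, 0) :=
  funext fun q => (hψx q.1 q.2).unique (hψ q).hasFDerivAt.hasDerivAt_fst_slice

theorem uncurry_eq_fderiv_apply_snd (hψ : Differentiable ℝ (uncurry ψ))
    (hψθ : ∀ x t, HasDerivAt (fun t' => ψ x t') (ψθ x t) t) :
    uncurry ψθ = fun q => fderiv ℝ (uncurry ψ) q (0, 1) :=
  funext fun q => (hψθ q.1 q.2).unique (hψ q).hasFDerivAt.hasDerivAt_snd_slice

theorem contDiff_uncurry_of_hasDerivAt_snd {m n : WithTop ℕ∞} (hψ : ContDiff ℝ n (uncurry ψ))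
    (hmn : m + 1 ≤ n) (hψθ : ∀ x t, HasDerivAt (fun t' => ψ x t') (ψθ x t) t) :
    ContDiff ℝ m (uncurry ψθ) := by
  rw [uncurry_eq_fderiv_apply_snd ((hψ.of_le (le_add_self.trans hmn)).differentiable one_ne_zero)
    hψθ]
  exact (hψ.fderiv_right hmn).clm_apply contDiff_const

theorem hasDerivAt_fst_of_mixed_partial (hψ : ContDiff ℝ 2 (uncurry ψ))
    (hψx : ∀ x t, HasDerivAt (fun x' => ψ x' t) (ψx x t) x)
    (hψθ : ∀ x t, HasDerivAt (fun t' => ψ x t') (ψθ x t) t)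
    (hψxθ : ∀ x t, HasDerivAt (fun t' => ψx x t') (ψxθ x t) t) (x t : ℝ) :
    HasDerivAt (fun x' => ψθ x' t) (ψxθ x t) x := by
  have hdiff : Differentiable ℝ (uncurry ψ) := hψ.differentiable (by simp)
  have hψ'' :
      HasFDerivAt (fderiv ℝ (uncurry ψ)) (fderiv ℝ (fderiv ℝ (uncurry ψ)) (x, t)) (x, t) :=
    ((hψ.fderiv_right (m := 1) le_rfl).differentiable one_ne_zero _).hasFDerivAt
  have hxθ : HasDerivAt (fun t' => ψx x t')
      (fderiv ℝ (fderiv ℝ (uncurry ψ)) (x, t) (0, 1) (1, 0)) t := by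
    have h := (hψ''.clm_apply (hasFDerivAt_const ((1 : ℝ), (0 : ℝ)) _)).hasDerivAt_snd_slice
    rw [show (fun t' => ψx x t') = fun t' => uncurry ψx (x, t') from rfl,
      uncurry_eq_fderiv_apply_fst hdiff hψx]
    simpa using h
  have hθx : HasDerivAt (fun x' => ψθ x' t)
      (fderiv ℝ (fderiv ℝ (uncurry ψ)) (x, t) (1, 0) (0, 1)) x := by
    have h := (hψ''.clm_apply (hasFDerivAt_const ((0 : ℝ), (1 : ℝ)) _)).hasDerivAt_fst_slice
    rw [show (fun x' => ψθ x' t) = fun x' => uncurry ψθ (x', t) from rfl,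
      uncurry_eq_fderiv_apply_snd hdiff hψθ]
    simpa using h
  rwa [(hψxθ x t).unique hxθ, hψ.contDiffAt.isSymmSndFDerivAt (by simp)]

theorem Function.Even.odd_uncurry_of_hasDerivAt_snd (hψ : (uncurry ψ).Even)
    (hψθ : ∀ x t, HasDerivAt (fun t' => ψ x t') (ψθ x t) t) : (uncurry ψθ).Odd := fun q => by
  have h := (hψθ (-q.1) (-q.2)).scomp q.2 (hasDerivAt_neg q.2)
  simp only [neg_smul, one_smul, Function.comp_def] at h
  rw [show (fun t => ψ (-q.1) (-t)) = fun t => ψ q.1 t from funext fun t => hψ (q.1, t)] at h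
  simp only [uncurry, Prod.fst_neg, Prod.snd_neg, (hψθ q.1 q.2).unique h, neg_neg]

end PartialDerivatives

section PairwiseShift

variable {ι : Type*} [Fintype ι] [DecidableEq ι]

def pairwiseShift (g : ℝ → ℝ → ℝ) (θ x : ι → ℝ) : ι → ℝ :=
  fun i => x i + ∑ j ∈ univ.erase i, g (x i - x j) (θ i - θ j)

theorem sum_sum_erase_mul_nonneg_of_antisymm (a : ι → ι → ℝ) (u : ι → ℝ)
    (ha : ∀ i j, a j i = -a i j) (hau : ∀ i j, 0 ≤ a i j * (u i - u j)) :
    0 ≤ ∑ i, ∑ j ∈ univ.erase i, a i j * u i := by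
  -- by antisymmetry, twice the sum is `∑ i, ∑ j, a i j * (u i - u j)`
  have hdiag : ∀ i, a i i = 0 := fun i => by linarith [ha i i]
  have hfull : ∑ i, ∑ j ∈ univ.erase i, a i j * u i = ∑ i, ∑ j, a i j * u i :=
    sum_congr rfl fun i _ => sum_erase _ (by rw [hdiag, zero_mul])
  have hswap : ∑ i, ∑ j, a i j * u j = -∑ i, ∑ j, a i j * u i := by
    rw [sum_comm]
    simp only [← sum_neg_distrib, ← neg_mul, ← ha]
  have hsum : 0 ≤ ∑ i, ∑ j, a i j * (u i - u j) :=
    sum_nonneg fun i _ => sum_nonneg fun j _ => hau i j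
  simp only [mul_sub, sum_sub_distrib, hswap] at hsum
  linarith

theorem sum_sq_le_sum_pairwiseShift_sub_mul {g : ℝ → ℝ → ℝ} (hmono : ∀ t, Monotone (g · t))
    (hodd : (uncurry g).Odd) (θ x y : ι → ℝ) :
    ∑ i, (x i - y i) ^ 2 ≤
      ∑ i, (pairwiseShift g θ x i - pairwiseShift g θ y i) * (x i - y i) := by
  set a : ι → ι → ℝ := fun i j => g (x i - x j) (θ i - θ j) - g (y i - y j) (θ i - θ j)
  have hodd' : ∀ s t, g (-s) (-t) = -g s t := fun s t => hodd (s, t)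
  have ha : ∀ i j, a j i = -a i j := fun i j => by
    simp only [a, ← neg_sub (x i), ← neg_sub (y i), ← neg_sub (θ i), hodd']
    ring
  have hau : ∀ i j, 0 ≤ a i j * ((x - y) i - (x - y) j) := fun i j => by
    have := (monovary_id_iff.2 (hmono (θ i - θ j))).sub_mul_sub_nonneg (y i - y j) (x i - x j)
    refine this.trans_eq ?_
    simp only [a, id, Pi.sub_apply]
    ring
  have hexpand : ∀ i, (pairwiseShift g θ x i - pairwiseShift g θ y i) * (x i - y i) =
      (x i - y i) ^ 2 + ∑ j ∈ univ.erase i, a i j * (x - y) i := fun i => by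
    simp only [pairwiseShift, a, Pi.sub_apply, ← sum_mul, sum_sub_distrib]
    ring
  rw [sum_congr rfl fun i _ => hexpand i, sum_add_distrib]
  linarith [sum_sum_erase_mul_nonneg_of_antisymm a (x - y) ha hau]

theorem contDiff_pairwiseShift {g : ℝ → ℝ → ℝ} {n : WithTop ℕ∞} (hg : ContDiff ℝ n (uncurry g))
    (θ : ι → ℝ) : ContDiff ℝ n (pairwiseShift g θ) :=
  contDiff_pi.2 fun i => (contDiff_apply ℝ ℝ i).add <| ContDiff.sum fun j _ =>
    hg.comp (((contDiff_apply ℝ ℝ i).sub (contDiff_apply ℝ ℝ j)).prodMk contDiff_const)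

end PairwiseShift

theorem stmt1_general (N : ℕ)
    (ψ ψx ψθ ψxθ : ℝ → ℝ → ℝ)
    (hC2 : ContDiff ℝ 2 (fun q : ℝ × ℝ => ψ q.1 q.2))
    (hψx : ∀ x t, HasDerivAt (fun x' => ψ x' t) (ψx x t) x)
    (hψθ : ∀ x t, HasDerivAt (fun t' => ψ x t') (ψθ x t) t)
    (hψxθ : ∀ x t, HasDerivAt (fun t' => ψx x t') (ψxθ x t) t)
    (hpos : ∀ x t, 0 ≤ ψxθ x t)
    (hsym : ∀ x t, ψ (-x) (-t) = ψ x t)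
    (θ : Fin N → ℝ)
    (F : (Fin N → ℝ) → (Fin N → ℝ))
    (hF : ∀ x i, F x i = x i + ∑ j ∈ Finset.univ.erase i, ψθ (x i - x j) (θ i - θ j)) :
    Function.Bijective F ∧ ContDiff ℝ 1 F ∧ ContDiff ℝ 1 (Function.invFun F) ∧
      ∀ y : Fin N → ℝ, ∃! x : Fin N → ℝ,
        ∀ i, y i = x i + ∑ j ∈ Finset.univ.erase i, ψθ (x i - x j) (θ i - θ j) := by
  have hFeq : F = pairwiseShift ψθ θ := funext fun x => funext (hF x)
  have hψθ' := hasDerivAt_fst_of_mixed_partial hC2 hψx hψθ hψxθ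
  have hmono : ∀ t, Monotone (ψθ · t) := fun t => monotone_of_deriv_nonneg
    (fun x => (hψθ' x t).differentiableAt) (fun x => (hψθ' x t).deriv ▸ hpos x t)
  have hodd : (uncurry ψθ).Odd :=
    Function.Even.odd_uncurry_of_hasDerivAt_snd (fun q => hsym q.1 q.2) hψθ
  have hC1 : ContDiff ℝ 1 F :=
    hFeq ▸ contDiff_pairwiseShift (contDiff_uncurry_of_hasDerivAt_snd hC2 (by norm_num) hψθ) θ
  obtain ⟨K, hK⟩ := exists_antilipschitzWith_of_sum_sq_le (f := F) fun x y =>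
    hFeq ▸ sum_sq_le_sum_pairwiseShift_sub_mul hmono hodd θ x y
  obtain ⟨hbij, hinv⟩ := hK.bijective_and_contDiff_invFun hC1 one_ne_zero
  refine ⟨hbij, hC1, hinv, fun y => ?_⟩
  simpa [funext_iff, hF, eq_comm] using hbij.existsUnique y

/-- For fixed asymptotic momenta `θ`, the map `x ↦ y`,
`yᵢ = xᵢ + ∑_{j≠i} ψ_θ(xᵢ−xⱼ, θᵢ−θⱼ)`, is a `C¹` diffeomorphism of `ℝᴺ`;
in particular for every `y` the system has a unique solution `x`. -/
theorem stmt1 (N : ℕ) (ε : ℝ) (hε : 0 < ε)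
    (ψ ψx ψθ ψxθ : ℝ → ℝ → ℝ)
    (hC2 : ContDiff ℝ 2 (fun q : ℝ × ℝ => ψ q.1 q.2))
    (hψx : ∀ x t, HasDerivAt (fun x' => ψ x' t) (ψx x t) x)
    (hψθ : ∀ x t, HasDerivAt (fun t' => ψ x t') (ψθ x t) t)
    (hψxθ : ∀ x t, HasDerivAt (fun t' => ψx x t') (ψxθ x t) t)
    (hpos : ∀ x t, 0 ≤ ψxθ x t)
    (hsym : ∀ x t, ψ (-x) (-t) = ψ x t)
    (hrange : ∀ x t, ε ≤ |x| → ψx x t = 0)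
    (θ : Fin N → ℝ)
    (F : (Fin N → ℝ) → (Fin N → ℝ))
    (hF : ∀ x i, F x i = x i + ∑ j ∈ Finset.univ.erase i, ψθ (x i - x j) (θ i - θ j)) :
    Function.Bijective F ∧ ContDiff ℝ 1 F ∧ ContDiff ℝ 1 (Function.invFun F) ∧
      ∀ y : Fin N → ℝ, ∃! x : Fin N → ℝ,
        ∀ i, y i = x i + ∑ j ∈ Finset.univ.erase i, ψθ (x i - x j) (θ i - θ j) :=
  stmt1_general N ψ ψx ψθ ψxθ hC2 hψx hψθ hψxθ hpos hsym θ F hF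
end

section
/- For every fixed x ∈ ℝ^N, the map G : ℝ^N → ℝ^N defined by G(θ)_i = θ_i + Σ_{j≠i} ψ_x(x_i−x_j, θ_i−θ_j) is a C¹ diffeomorphism of ℝ^N onto ℝ^N. In particular, for every p ∈ ℝ^N the system p_i = θ_i + Σ_{j≠i} ψ_x(x_i−x_j, θ_i−θ_j) (i = 1,…,N) has a unique solution θ ∈ ℝ^N, and the solution map Θ : (x,p) ↦ θ is continuously differentiable on ℝ^{2N}. -/
/-!
Since `ψ` is even, `ψ_x` is odd in both arguments, and `ψ_{xθ} ≥ 0` makes it monotone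
in `θ`. Pairing the terms `(i, j)` and `(j, i)` gives `⟪G θ - G θ', θ - θ'⟫ ≥ ‖θ - θ'‖₂²`,
so `G` is anti-Lipschitz. The derivative of a `C¹` anti-Lipschitz self-map of `ℝᴺ` is
injective, hence invertible, so the map is open by the inverse function theorem; it is also
proper, so its range is clopen and it is a diffeomorphism. For the solution map `Θ`, invert
`(x, θ) ↦ (x, G_x θ)`: it is bijective slice by slice, and its derivative is injective
because every slice `G_x` is anti-Lipschitz.
-/

open Finset Function Filter
open scoped NNReal

section InverseFunction

variable {𝕜 : Type*} [RCLike 𝕜] {E F : Type*} [NormedAddCommGroup E] [NormedSpace 𝕜 E]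
  [NormedAddCommGroup F] [NormedSpace 𝕜 F] [CompleteSpace E] [CompleteSpace F]
  {f : E → F} {n : WithTop ℕ∞}

theorem ContDiff.hasStrictFDerivAt_ofBijective (hf : ContDiff 𝕜 n f) (hn : n ≠ 0) {a : E}
    (hf' : Bijective (fderiv 𝕜 f a)) :
    HasStrictFDerivAt f (ContinuousLinearEquiv.ofBijective (fderiv 𝕜 f a)
      (LinearMap.ker_eq_bot.2 hf'.1) (LinearMap.range_eq_top.2 hf'.2) : E →L[𝕜] F) a := by
  rw [ContinuousLinearEquiv.coe_ofBijective]
  exact hf.contDiffAt.hasStrictFDerivAt hn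

theorem ContDiff.isOpenMap_of_bijective_fderiv (hf : ContDiff 𝕜 n f) (hn : n ≠ 0)
    (hf' : ∀ a, Bijective (fderiv 𝕜 f a)) : IsOpenMap f :=
  isOpenMap_of_hasStrictFDerivAt_equiv fun a => hf.hasStrictFDerivAt_ofBijective hn (hf' a)

theorem ContDiff.contDiff_invFun_of_bijective_fderiv (hf : ContDiff 𝕜 n f) (hn : n ≠ 0)
    (hbij : Bijective f) (hf' : ∀ a, Bijective (fderiv 𝕜 f a)) :
    ContDiff 𝕜 n (invFun f) := by
  let h := (Equiv.ofBijective f hbij).toHomeomorphOfContinuousOpen hf.continuous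
    (hf.isOpenMap_of_bijective_fderiv hn hf')
  have hinv : invFun f = h.symm := funext fun y =>
    hbij.1 <| (rightInverse_invFun hbij.2 y).trans (h.apply_symm_apply y).symm
  rw [hinv]
  exact h.contDiff_symm (fun a => (hf.hasStrictFDerivAt_ofBijective hn (hf' a)).hasFDerivAt) hf

end InverseFunction

section Antilipschitz

variable {E F : Type*} [NormedAddCommGroup E] [NormedSpace ℝ E]
  [NormedAddCommGroup F] [NormedSpace ℝ F] {f : E → F} {K : ℝ≥0}

theorem HasFDerivAt.antilipschitzWith {f' : E →L[ℝ] F} {a : E} (hf' : HasFDerivAt f f' a)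
    (hf : AntilipschitzWith K f) : AntilipschitzWith K f' := by
  refine f'.antilipschitz_of_bound fun v => ?_
  refine ge_of_tendsto ((hf'.lim_real v).norm.const_mul (K : ℝ)) ?_
  filter_upwards [eventually_gt_atTop 0] with c hc
  have h := hf.le_mul_dist (a + c⁻¹ • v) a
  rw [dist_eq_norm, dist_eq_norm, add_sub_cancel_left, norm_smul, Real.norm_of_nonneg
    (inv_nonneg.2 hc.le)] at h
  rw [norm_smul, Real.norm_of_nonneg hc.le]
  calc ‖v‖ = c * (c⁻¹ * ‖v‖) := by field_simp
    _ ≤ c * (K * ‖f (a + c⁻¹ • v) - f a‖) := by gcongr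
    _ = K * (c * ‖f (a + c⁻¹ • v) - f a‖) := by ring

variable [FiniteDimensional ℝ E] {g : E → E} {n : WithTop ℕ∞}

theorem AntilipschitzWith.bijective_fderiv (hg : AntilipschitzWith K g) {a : E}
    (hga : DifferentiableAt ℝ g a) : Bijective (fderiv ℝ g a) :=
  have hinj := (hga.hasFDerivAt.antilipschitzWith hg).injective
  ⟨hinj, LinearMap.injective_iff_surjective.1 hinj⟩

theorem ContDiff.surjective_of_antilipschitzWith (hg : ContDiff ℝ n g) (hn : n ≠ 0)
    (hanti : AntilipschitzWith K g) : Surjective g := by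
  have hproper : IsProperMap g := by
    refine isProperMap_iff_tendsto_cocompact.2 ⟨hg.continuous, ?_⟩
    rw [← Metric.cobounded_eq_cocompact]
    exact hanti.tendsto_cobounded
  have hopen : IsOpenMap g := hg.isOpenMap_of_bijective_fderiv hn fun a =>
    hanti.bijective_fderiv (hg.contDiffAt.differentiableAt hn)
  exact Set.range_eq_univ.1 <|
    IsClopen.eq_univ ⟨hproper.isClosedMap.isClosed_range, hopen.isOpen_range⟩
      (Set.range_nonempty g)

end Antilipschitz

section Parametric

variable {P E : Type*} [NormedAddCommGroup P] [NormedSpace ℝ P] [FiniteDimensional ℝ P]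
  [NormedAddCommGroup E] [NormedSpace ℝ E] [FiniteDimensional ℝ E]
  {H : P × E → E} {n : WithTop ℕ∞} {K : P → ℝ≥0}

theorem bijective_fderiv_prodMk_of_antilipschitzWith {q : P × E}
    (hH : DifferentiableAt ℝ H q) (hanti : AntilipschitzWith (K q.1) fun θ => H (q.1, θ)) :
    Bijective (fderiv ℝ (fun q => (q.1, H q)) q) := by
  have hslice : HasFDerivAt (fun θ => H (q.1, θ)) ((fderiv ℝ H q).comp (.inr ℝ P E)) q.2 :=
    hH.hasFDerivAt.comp q.2 (hasFDerivAt_prodMk_right q.1 q.2)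
  have hinj := (hslice.antilipschitzWith hanti).injective
  have hinjF : Injective ((ContinuousLinearMap.fst ℝ P E).prod (fderiv ℝ H q)) := by
    rw [injective_iff_map_eq_zero]
    rintro ⟨u, v⟩ h
    simp only [ContinuousLinearMap.prod_apply, ContinuousLinearMap.coe_fst', Prod.mk_eq_zero] at h
    obtain ⟨rfl, hv⟩ := h
    have hv' : (fderiv ℝ H q ∘L .inr ℝ P E) v = 0 := by simpa using hv
    exact Prod.ext rfl (hinj (hv'.trans (map_zero _).symm))
  rw [(hasFDerivAt_fst.prodMk hH.hasFDerivAt).fderiv]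
  exact ⟨hinjF, LinearMap.injective_iff_surjective.1 hinjF⟩

theorem ContDiff.exists_contDiff_solution_of_antilipschitzWith (hH : ContDiff ℝ n H)
    (hn : n ≠ 0) (hanti : ∀ p, AntilipschitzWith (K p) fun θ => H (p, θ)) :
    ∃ Θ : P × E → E, ContDiff ℝ n Θ ∧ ∀ p y, H (p, Θ (p, y)) = y := by
  set F : P × E → P × E := fun q => (q.1, H q)
  have hFbij : Bijective F := by
    refine ⟨?_, ?_⟩
    · rintro ⟨p, θ⟩ ⟨p', θ'⟩ h
      obtain rfl : p = p' := congrArg Prod.fst h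
      exact Prod.ext rfl ((hanti p).injective (congrArg Prod.snd h))
    · rintro ⟨p, y⟩
      have hslice : ContDiff ℝ n fun θ => H (p, θ) :=
        hH.comp (contDiff_const.prodMk contDiff_id)
      obtain ⟨θ, hθ⟩ := hslice.surjective_of_antilipschitzWith hn (hanti p) y
      exact ⟨(p, θ), Prod.ext rfl hθ⟩
  have hFinv : ContDiff ℝ n (invFun F) :=
    (contDiff_fst.prodMk hH).contDiff_invFun_of_bijective_fderiv hn hFbij fun q =>
      bijective_fderiv_prodMk_of_antilipschitzWith (hH.contDiffAt.differentiableAt hn) (hanti q.1)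
  refine ⟨fun q => (invFun F q).2, contDiff_snd.comp hFinv, fun p y => ?_⟩
  set q := invFun F (p, y)
  obtain ⟨hq₁, hq₂⟩ : q.1 = p ∧ H q = y :=
    Prod.ext_iff.1 (rightInverse_invFun hFbij.2 (p, y))
  show H (p, q.2) = y
  rw [← hq₁]
  exact hq₂

end Parametric

section Partial

variable {ψ ψx : ℝ → ℝ → ℝ}

theorem partial_fst_neg_neg_of_even (hψx : ∀ a t, HasDerivAt (fun a' => ψ a' t) (ψx a t) a)
    (hsym : ∀ a t, ψ (-a) (-t) = ψ a t) (a t : ℝ) :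
    ψx (-a) (-t) = -ψx a t := by
  have h := (hψx (-a) (-t)).comp a (hasDerivAt_neg a)
  simp only [comp_def, hsym] at h
  linarith [(hψx a t).unique h]

theorem contDiff_partial_fst (hψx : ∀ a t, HasDerivAt (fun a' => ψ a' t) (ψx a t) a)
    {m n : WithTop ℕ∞} (hψ : ContDiff ℝ n fun q : ℝ × ℝ => ψ q.1 q.2)
    (hmn : m + 1 ≤ n) : ContDiff ℝ m fun q : ℝ × ℝ => ψx q.1 q.2 := by
  have hn : n ≠ 0 := (zero_lt_one.trans_le (le_add_self.trans hmn)).ne'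
  have heq : (fun q : ℝ × ℝ => ψx q.1 q.2) =
      fun q => fderiv ℝ (fun q : ℝ × ℝ => ψ q.1 q.2) q (1, 0) := by
    funext ⟨a, t⟩
    have hline : HasDerivAt (fun a' : ℝ => (a', t)) (1, 0) a :=
      (hasDerivAt_id a).prodMk (hasDerivAt_const a t)
    have hcomp := (hψ.differentiable hn (a, t)).hasFDerivAt.comp_hasDerivAt a hline
    exact (hψx a t).unique hcomp
  rw [heq]
  exact (hψ.fderiv_right hmn).clm_apply contDiff_const

end Partial

theorem sum_sum_mul_nonneg_of_antisymm {ι : Type*} [Fintype ι] {Δ : ι → ι → ℝ}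
    {v : ι → ℝ} (hΔ : ∀ i j, Δ j i = -Δ i j) (hpair : ∀ i j, 0 ≤ Δ i j * (v i - v j)) :
    0 ≤ ∑ i, ∑ j, Δ i j * v i := by
  have hswap : ∑ i, ∑ j, Δ i j * v i = -∑ i, ∑ j, Δ i j * v j := by
    rw [sum_comm, ← sum_neg_distrib]
    refine sum_congr rfl fun i _ => ?_
    rw [← sum_neg_distrib]
    refine sum_congr rfl fun j _ => ?_
    rw [hΔ]
    ring
  have hsum : 0 ≤ ∑ i, ∑ j, Δ i j * (v i - v j) :=
    sum_nonneg fun i _ => sum_nonneg fun j _ => hpair i j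
  simp only [mul_sub, sum_sub_distrib] at hsum
  linarith

section Bethe

variable {ι : Type*} [Fintype ι] [DecidableEq ι] {φ : ℝ → ℝ → ℝ}

def betheMap (φ : ℝ → ℝ → ℝ) (x θ : ι → ℝ) : ι → ℝ :=
  fun i => θ i + ∑ j ∈ univ.erase i, φ (x i - x j) (θ i - θ j)

theorem sum_sq_sub_le_sum_betheMap_sub_mul (hodd : ∀ a t, φ (-a) (-t) = -φ a t)
    (hmono : ∀ a, Monotone (φ a)) (x θ θ' : ι → ℝ) :
    ∑ i, (θ i - θ' i) ^ 2 ≤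
      ∑ i, (betheMap φ x θ i - betheMap φ x θ' i) * (θ i - θ' i) := by
  set Δ : ι → ι → ℝ := fun i j =>
    φ (x i - x j) (θ i - θ j) - φ (x i - x j) (θ' i - θ' j)
  have hsub : ∀ i, betheMap φ x θ i - betheMap φ x θ' i = (θ i - θ' i) + ∑ j, Δ i j := by
    intro i
    rw [← sum_erase univ (a := i) (by simp only [Δ, sub_self])]
    simp only [betheMap, Δ, sum_sub_distrib]
    ring
  have hskew : ∀ i j, Δ j i = -Δ i j := by
    intro i j
    simp only [Δ, ← neg_sub (x i), ← neg_sub (θ i), ← neg_sub (θ' i), hodd]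
    ring
  have hpair : ∀ i j, 0 ≤ Δ i j * ((θ i - θ' i) - (θ j - θ' j)) := by
    intro i j
    rw [show (θ i - θ' i) - (θ j - θ' j) = (θ i - θ j) - (θ' i - θ' j) by ring]
    rcases le_total (θ i - θ j) (θ' i - θ' j) with h | h
    · exact mul_nonneg_of_nonpos_of_nonpos (sub_nonpos.2 (hmono _ h)) (sub_nonpos.2 h)
    · exact mul_nonneg (sub_nonneg.2 (hmono _ h)) (sub_nonneg.2 h)
  have hcross := sum_sum_mul_nonneg_of_antisymm hskew hpair
  simp only [hsub, add_mul, sum_add_distrib, sum_mul, ← sq]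
  linarith

theorem antilipschitzWith_betheMap (hodd : ∀ a t, φ (-a) (-t) = -φ a t)
    (hmono : ∀ a, Monotone (φ a)) (x : ι → ℝ) :
    AntilipschitzWith (Fintype.card ι) (betheMap φ x) := by
  refine AntilipschitzWith.of_le_mul_dist fun θ θ' => ?_
  rw [dist_eq_norm, dist_eq_norm]
  set v := θ - θ'
  set w := betheMap φ x θ - betheMap φ x θ'
  have hkey : ∑ i, v i ^ 2 ≤ ∑ i, w i * v i :=
    sum_sq_sub_le_sum_betheMap_sub_mul hodd hmono x θ θ'
  have hsup : ‖v‖ ^ 2 ≤ ∑ i, v i ^ 2 := by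
    refine (Real.le_sqrt (norm_nonneg v) (sum_nonneg fun i _ => sq_nonneg (v i))).1 ?_
    refine (pi_norm_le_iff_of_nonneg (Real.sqrt_nonneg _)).2 fun i => ?_
    refine Real.abs_le_sqrt ?_
    exact single_le_sum (f := fun i => v i ^ 2) (fun i _ => sq_nonneg (v i)) (mem_univ i)
  have hinner : ∑ i, w i * v i ≤ Fintype.card ι * (‖w‖ * ‖v‖) := by
    calc ∑ i, w i * v i ≤ ∑ _i : ι, ‖w‖ * ‖v‖ := by
          refine sum_le_sum fun i _ => (le_abs_self _).trans ?_
          rw [abs_mul]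
          exact mul_le_mul (norm_le_pi_norm w i) (norm_le_pi_norm v i) (abs_nonneg _)
            (norm_nonneg w)
      _ = Fintype.card ι * (‖w‖ * ‖v‖) := by simp
  push_cast
  have hcw : (0 : ℝ) ≤ Fintype.card ι * ‖w‖ := by positivity
  nlinarith [norm_nonneg v]

theorem contDiff_betheMap {n : WithTop ℕ∞}
    (hφ : ContDiff ℝ n fun q : ℝ × ℝ => φ q.1 q.2) :
    ContDiff ℝ n fun q : (ι → ℝ) × (ι → ℝ) => betheMap φ q.1 q.2 := by
  unfold betheMap
  fun_prop

end Bethe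

theorem stmt2_general (N : ℕ)
    (ψ ψx ψxθ : ℝ → ℝ → ℝ)
    (hC2 : ContDiff ℝ 2 (fun q : ℝ × ℝ => ψ q.1 q.2))
    (hψx : ∀ x t, HasDerivAt (fun x' => ψ x' t) (ψx x t) x)
    (hψxθ : ∀ x t, HasDerivAt (fun t' => ψx x t') (ψxθ x t) t)
    (hpos : ∀ x t, 0 ≤ ψxθ x t)
    (hsym : ∀ x t, ψ (-x) (-t) = ψ x t)
    (x : Fin N → ℝ)
    (G : (Fin N → ℝ) → (Fin N → ℝ))
    (hG : ∀ θ i, G θ i = θ i + ∑ j ∈ Finset.univ.erase i, ψx (x i - x j) (θ i - θ j)) :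
    Function.Bijective G ∧ ContDiff ℝ 1 G ∧ ContDiff ℝ 1 (Function.invFun G) ∧
      (∀ p : Fin N → ℝ, ∃! θ : Fin N → ℝ,
        ∀ i, p i = θ i + ∑ j ∈ Finset.univ.erase i, ψx (x i - x j) (θ i - θ j)) ∧
      ∃ Θ : (Fin N → ℝ) × (Fin N → ℝ) → (Fin N → ℝ), ContDiff ℝ 1 Θ ∧
        ∀ (x' p : Fin N → ℝ) (i : Fin N),
          p i = Θ (x', p) i
            + ∑ j ∈ Finset.univ.erase i, ψx (x' i - x' j) (Θ (x', p) i - Θ (x', p) j) := by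
  have hodd := partial_fst_neg_neg_of_even hψx hsym
  have hmono : ∀ a, Monotone (ψx a) := fun a =>
    monotone_of_hasDerivAt_nonneg (hψxθ a) (hpos a)
  have hH := contDiff_betheMap (ι := Fin N) (contDiff_partial_fst hψx (m := 1) hC2 (by norm_num))
  have hanti := antilipschitzWith_betheMap (ι := Fin N) hodd hmono
  obtain rfl : G = betheMap ψx x := funext fun θ => funext (hG θ)
  have hG₁ : ContDiff ℝ 1 (betheMap ψx x) := hH.comp (contDiff_const.prodMk contDiff_id)
  have hbij : Bijective (betheMap ψx x) :=
    ⟨(hanti x).injective, hG₁.surjective_of_antilipschitzWith one_ne_zero (hanti x)⟩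
  obtain ⟨Θ, hΘ, hsol⟩ :=
    hH.exists_contDiff_solution_of_antilipschitzWith one_ne_zero hanti
  refine ⟨hbij, hG₁, hG₁.contDiff_invFun_of_bijective_fderiv one_ne_zero hbij fun a =>
      (hanti x).bijective_fderiv (hG₁.differentiable one_ne_zero a), fun p => ?_,
    Θ, hΘ, fun x' p i => (congrFun (hsol x' p) i).symm⟩
  simpa only [funext_iff, eq_comm, betheMap] using hbij.existsUnique p

/-- For fixed positions `x`, the map `θ ↦ p`,
`pᵢ = θᵢ + ∑_{j≠i} ψ_x(xᵢ−xⱼ, θᵢ−θⱼ)`, is a `C¹` diffeomorphism of `ℝᴺ`;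
for every `p` the system has a unique solution `θ`, and the solution map
`Θ : (x,p) ↦ θ` is continuously differentiable on `ℝ^{2N}`. -/
theorem stmt2 (N : ℕ) (ε : ℝ) (hε : 0 < ε)
    (ψ ψx ψθ ψxθ : ℝ → ℝ → ℝ)
    (hC2 : ContDiff ℝ 2 (fun q : ℝ × ℝ => ψ q.1 q.2))
    (hψx : ∀ x t, HasDerivAt (fun x' => ψ x' t) (ψx x t) x)
    (hψθ : ∀ x t, HasDerivAt (fun t' => ψ x t') (ψθ x t) t)
    (hψxθ : ∀ x t, HasDerivAt (fun t' => ψx x t') (ψxθ x t) t)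
    (hpos : ∀ x t, 0 ≤ ψxθ x t)
    (hsym : ∀ x t, ψ (-x) (-t) = ψ x t)
    (hrange : ∀ x t, ε ≤ |x| → ψx x t = 0)
    (x : Fin N → ℝ)
    (G : (Fin N → ℝ) → (Fin N → ℝ))
    (hG : ∀ θ i, G θ i = θ i + ∑ j ∈ Finset.univ.erase i, ψx (x i - x j) (θ i - θ j)) :
    Function.Bijective G ∧ ContDiff ℝ 1 G ∧ ContDiff ℝ 1 (Function.invFun G) ∧
      (∀ p : Fin N → ℝ, ∃! θ : Fin N → ℝ,
        ∀ i, p i = θ i + ∑ j ∈ Finset.univ.erase i, ψx (x i - x j) (θ i - θ j)) ∧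
      ∃ Θ : (Fin N → ℝ) × (Fin N → ℝ) → (Fin N → ℝ), ContDiff ℝ 1 Θ ∧
        ∀ (x' p : Fin N → ℝ) (i : Fin N),
          p i = Θ (x', p) i
            + ∑ j ∈ Finset.univ.erase i, ψx (x' i - x' j) (Θ (x', p) i - Θ (x', p) j) :=
  stmt2_general N ψ ψx ψxθ hC2 hψx hψxθ hpos hsym x G hG
end

section
/- Let (y,θ) ∈ ℝ^{2N} with θ_i ≠ θ_j for all i ≠ j, and set M(θ) = sup_{x∈ℝ}|ψ_θ(x,θ)|, M_i = Σ_{j≠i} M(θ_i−θ_j), and T = max_{i≠j} (|y_i−y_j| + M_i + M_j + ε)/|θ_i−θ_j|. For t ∈ ℝ let x(t) ∈ ℝ^N be the unique solution of y_i + θ_i t = x_i(t) + Σ_{j≠i} ψ_θ(x_i(t)−x_j(t), θ_i−θ_j), and let p_i(t) = θ_i + Σ_{j≠i} ψ_x(x_i(t)−x_j(t), θ_i−θ_j). Then for every t with |t| ≥ T and all i ≠ j: |x_i(t)−x_j(t)| ≥ ε and sign(x_i(t)−x_j(t)) = sign(θ_i−θ_j)·sign(t); consequently x_i(t) = y_i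 + θ_i t − Σ_{j≠i} ψ_θ(sign(t)·sign(θ_i−θ_j)·ε, θ_i−θ_j) and p_i(t) = θ_i. In particular the trajectories are linear with momenta θ for all |t| ≥ T. -/
/-!
Since `ψ_x(·, u)` vanishes for `|x| ≥ ε`, `ψ(·, u)` is constant on `x ≥ ε` and on `x ≤ -ε`,
hence so is `ψ_θ(·, u)`; being continuous, it is bounded, by `M(u)`. The defining equation then
keeps `xᵢ(t)` within `Mᵢ` of the free trajectory `yᵢ + θᵢ t`, so `xᵢ(t) - xⱼ(t)` is within
`|yᵢ - yⱼ| + Mᵢ + Mⱼ` of `(θᵢ - θⱼ) t`, whose modulus exceeds this by at least `ε` once `|t| ≥ T`.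
Thus the particles are `ε`-separated in the order given by `(θᵢ - θⱼ) t`, where `ψ_x = 0` and
`ψ_θ` takes its constant value at `± ε`.
-/

open Finset

namespace Real

theorem sign_mul (a b : ℝ) : sign (a * b) = sign a * sign b := by
  rcases lt_trichotomy a 0 with ha | ha | ha <;> rcases lt_trichotomy b 0 with hb | hb | hb <;>
    simp [sign_of_neg, sign_of_pos, ha, hb, mul_pos_of_neg_of_neg, mul_neg_of_neg_of_pos,
      mul_neg_of_pos_of_neg]

theorem sign_eq_of_abs_sub_le {d s ε : ℝ} (hε : 0 < ε) (h : |d - s| ≤ |s| - ε) :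
    sign d = sign s := by
  rw [abs_le] at h
  rcases lt_trichotomy s 0 with hs | rfl | hs
  · rw [abs_of_neg hs] at h
    rw [sign_of_neg hs, sign_of_neg (by linarith)]
  · simp only [abs_zero] at h
    linarith
  · rw [abs_of_pos hs] at h
    rw [sign_of_pos hs, sign_of_pos (by linarith)]

end Real

theorem le_abs_of_abs_sub_le {d s ε : ℝ} (h : |d - s| ≤ |s| - ε) : ε ≤ |d| := by
  linarith [abs_sub_abs_le_abs_sub s d, abs_sub_comm d s]

theorem abs_sub_le_sum_of_eq_add_sum {ι : Type*} {s : Finset ι} {f m : ι → ℝ} {a x : ℝ}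
    (h : a = x + ∑ j ∈ s, f j) (hf : ∀ j ∈ s, |f j| ≤ m j) : |x - a| ≤ ∑ j ∈ s, m j := by
  rw [h, sub_add_cancel_left, abs_neg]
  exact (abs_sum_le_sum_abs f s).trans (sum_le_sum hf)

theorem eq_of_hasDerivAt_of_eq_zero_on_convex {f f' : ℝ → ℝ} {s : Set ℝ} (hs : Convex ℝ s)
    (hf : ∀ x, HasDerivAt f (f' x) x) (h0 : ∀ x ∈ s, f' x = 0) {a b : ℝ} (ha : a ∈ s)
    (hb : b ∈ s) : f a = f b := by
  have := hs.norm_image_sub_le_of_norm_hasDerivWithin_le (C := 0)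
    (fun x _ => (hf x).hasDerivWithinAt) (fun x hx => by simp [h0 x hx]) hb ha
  simpa [sub_eq_zero] using this

theorem bddAbove_range_of_eq_on_Ici_Iic {g : ℝ → ℝ} {ε : ℝ} (hε : 0 ≤ ε) (hg : Continuous g)
    (hR : ∀ x, ε ≤ x → g x = g ε) (hL : ∀ x, x ≤ -ε → g x = g (-ε)) :
    BddAbove (Set.range g) := by
  refine ((isCompact_Icc (a := -ε) (b := ε)).image hg).bddAbove.mono ?_
  rintro _ ⟨x, rfl⟩
  rcases le_total x (-ε) with hx | hx
  · exact ⟨-ε, ⟨le_rfl, by linarith⟩, (hL x hx).symm⟩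
  rcases le_total x ε with hx' | hx'
  · exact ⟨x, ⟨hx, hx'⟩, rfl⟩
  · exact ⟨ε, ⟨by linarith, le_rfl⟩, (hR x hx').symm⟩

section PartialDerivatives

variable {ψ ψx ψθ : ℝ → ℝ → ℝ} {ε : ℝ}

theorem partialSnd_eq_of_mem_convex
    (hψx : ∀ x u, HasDerivAt (fun x' => ψ x' u) (ψx x u) x)
    (hψθ : ∀ x u, HasDerivAt (fun u' => ψ x u') (ψθ x u) u)
    {s : Set ℝ} (hs : Convex ℝ s) (hvanish : ∀ x ∈ s, ∀ u, ψx x u = 0)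
    {a b : ℝ} (ha : a ∈ s) (hb : b ∈ s) (u : ℝ) : ψθ a u = ψθ b u := by
  have hab : (fun u' => ψ a u') = fun u' => ψ b u' := funext fun u' =>
    eq_of_hasDerivAt_of_eq_zero_on_convex hs (hψx · u') (fun x hx => hvanish x hx u') ha hb
  exact (hψθ a u).unique (hab ▸ hψθ b u)

theorem partialSnd_eq_at_sign_mul
    (hψx : ∀ x u, HasDerivAt (fun x' => ψ x' u) (ψx x u) x)
    (hψθ : ∀ x u, HasDerivAt (fun u' => ψ x u') (ψθ x u) u)
    (hrange : ∀ x u, ε ≤ |x| → ψx x u = 0) {d : ℝ} (hd : ε ≤ |d|) (u : ℝ) :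
    ψθ d u = ψθ (Real.sign d * ε) u := by
  rcases lt_trichotomy d 0 with hneg | rfl | hpos
  · rw [abs_of_neg hneg] at hd
    rw [Real.sign_of_neg hneg, neg_one_mul]
    exact partialSnd_eq_of_mem_convex hψx hψθ (convex_Iic (-ε))
      (fun x hx u => hrange x u (le_abs.2 (Or.inr (le_neg_of_le_neg hx))))
      (Set.mem_Iic.2 (by linarith)) (Set.mem_Iic.2 le_rfl) u
  · simp [Real.sign_zero]
  · rw [abs_of_pos hpos] at hd
    rw [Real.sign_of_pos hpos, one_mul]
    exact partialSnd_eq_of_mem_convex hψx hψθ (convex_Ici ε)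
      (fun x hx u => hrange x u (le_abs.2 (Or.inl hx))) hd (Set.mem_Ici.2 le_rfl) u

theorem continuous_partialSnd (hC1 : ContDiff ℝ 1 (fun q : ℝ × ℝ => ψ q.1 q.2))
    (hψθ : ∀ x u, HasDerivAt (fun u' => ψ x u') (ψθ x u) u) (u : ℝ) :
    Continuous fun x => ψθ x u := by
  set f : ℝ × ℝ → ℝ := fun q => ψ q.1 q.2
  have hfderiv : ∀ x, ψθ x u = fderiv ℝ f (x, u) (0, 1) := fun x =>
    (hψθ x u).unique <| ((hC1.differentiable one_ne_zero) (x, u)).hasFDerivAt.comp_hasDerivAt u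
      ((hasDerivAt_const u x).prodMk (hasDerivAt_id u))
  simp only [hfderiv]
  exact ((hC1.continuous_fderiv one_ne_zero).comp
    (continuous_id.prodMk continuous_const)).clm_apply continuous_const

theorem abs_partialSnd_le_iSup (hε : 0 ≤ ε) (hC1 : ContDiff ℝ 1 (fun q : ℝ × ℝ => ψ q.1 q.2))
    (hψx : ∀ x u, HasDerivAt (fun x' => ψ x' u) (ψx x u) x)
    (hψθ : ∀ x u, HasDerivAt (fun u' => ψ x u') (ψθ x u) u)
    (hrange : ∀ x u, ε ≤ |x| → ψx x u = 0) (x u : ℝ) :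
    |ψθ x u| ≤ ⨆ x', |ψθ x' u| := by
  refine le_ciSup (bddAbove_range_of_eq_on_Ici_Iic hε (continuous_partialSnd hC1 hψθ u).abs
    (fun x hx => ?_) (fun x hx => ?_)) x
  · rw [partialSnd_eq_of_mem_convex hψx hψθ (convex_Ici ε)
      (fun x hx u => hrange x u (le_abs.2 (Or.inl hx))) (Set.mem_Ici.2 hx) (Set.mem_Ici.2 le_rfl) u]
  · rw [partialSnd_eq_of_mem_convex hψx hψθ (convex_Iic (-ε))
      (fun x hx u => hrange x u (le_abs.2 (Or.inr (le_neg_of_le_neg hx)))) (Set.mem_Iic.2 hx)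
      (Set.mem_Iic.2 le_rfl) u]

end PartialDerivatives

theorem separation_of_abs_sub_free_le {xi xj yi yj θi θj Mi Mj ε T t : ℝ} (hε : 0 < ε)
    (hθ : θi ≠ θj) (hi : |xi - (yi + θi * t)| ≤ Mi) (hj : |xj - (yj + θj * t)| ≤ Mj)
    (hT : (|yi - yj| + Mi + Mj + ε) / |θi - θj| ≤ T) (ht : T ≤ |t|) :
    ε ≤ |xi - xj| ∧ Real.sign (xi - xj) = Real.sign (θi - θj) * Real.sign t := by
  have hfar : |yi - yj| + Mi + Mj + ε ≤ |(θi - θj) * t| := by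
    rw [abs_mul, mul_comm]
    exact (div_le_iff₀ (abs_pos.2 (sub_ne_zero.2 hθ))).1 (hT.trans ht)
  have hclose : |(xi - xj) - (θi - θj) * t| ≤ |(θi - θj) * t| - ε := by
    rw [abs_le] at hi hj ⊢
    constructor <;> linarith [le_abs_self (yi - yj), neg_abs_le (yi - yj)]
  exact ⟨le_abs_of_abs_sub_le hclose, by rw [Real.sign_eq_of_abs_sub_le hε hclose, Real.sign_mul]⟩

theorem stmt5_general (N : ℕ) (ε : ℝ) (hε : 0 < ε)
    (ψ ψx ψθ : ℝ → ℝ → ℝ)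
    (hC2 : ContDiff ℝ 2 (fun q : ℝ × ℝ => ψ q.1 q.2))
    (hψx : ∀ x t, HasDerivAt (fun x' => ψ x' t) (ψx x t) x)
    (hψθ : ∀ x t, HasDerivAt (fun t' => ψ x t') (ψθ x t) t)
    (hrange : ∀ x t, ε ≤ |x| → ψx x t = 0)
    (y θ : Fin N → ℝ) (hdist : ∀ i j, i ≠ j → θ i ≠ θ j)
    (M : ℝ → ℝ) (hM : ∀ u, M u = ⨆ x : ℝ, |ψθ x u|)
    (Mi : Fin N → ℝ) (hMi : ∀ i, Mi i = ∑ j ∈ Finset.univ.erase i, M (θ i - θ j))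
    (T : ℝ)
    (hT : ∀ i j, i ≠ j → (|y i - y j| + Mi i + Mi j + ε) / |θ i - θ j| ≤ T)
    (xt : ℝ → Fin N → ℝ)
    (hxt : ∀ t i, y i + θ i * t
      = xt t i + ∑ j ∈ Finset.univ.erase i, ψθ (xt t i - xt t j) (θ i - θ j))
    (pt : ℝ → Fin N → ℝ)
    (hpt : ∀ t i, pt t i
      = θ i + ∑ j ∈ Finset.univ.erase i, ψx (xt t i - xt t j) (θ i - θ j)) :
    ∀ t : ℝ, T ≤ |t| →
      (∀ i j, i ≠ j →
        ε ≤ |xt t i - xt t j| ∧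
        Real.sign (xt t i - xt t j) = Real.sign (θ i - θ j) * Real.sign t) ∧
      (∀ i, xt t i = y i + θ i * t
          - ∑ j ∈ Finset.univ.erase i,
              ψθ (Real.sign t * Real.sign (θ i - θ j) * ε) (θ i - θ j)
        ∧ pt t i = θ i) := by
  intro t ht
  have hbound : ∀ x u, |ψθ x u| ≤ M u := fun x u =>
    hM u ▸ abs_partialSnd_le_iSup hε.le (hC2.of_le one_le_two) hψx hψθ hrange x u
  have hfree : ∀ i, |xt t i - (y i + θ i * t)| ≤ Mi i := fun i =>
    hMi i ▸ abs_sub_le_sum_of_eq_add_sum (hxt t i) fun j _ => hbound _ _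
  have hsep : ∀ i j, i ≠ j → ε ≤ |xt t i - xt t j| ∧
      Real.sign (xt t i - xt t j) = Real.sign (θ i - θ j) * Real.sign t := fun i j hij =>
    separation_of_abs_sub_free_le hε (hdist i j hij) (hfree i) (hfree j) (hT i j hij) ht
  refine ⟨hsep, fun i => ⟨?_, ?_⟩⟩
  · have hsum : ∑ j ∈ univ.erase i, ψθ (xt t i - xt t j) (θ i - θ j)
        = ∑ j ∈ univ.erase i, ψθ (Real.sign t * Real.sign (θ i - θ j) * ε) (θ i - θ j) :=
      sum_congr rfl fun j hj => by
        obtain ⟨hfar, hsign⟩ := hsep i j (ne_of_mem_erase hj).symm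
        rw [partialSnd_eq_at_sign_mul hψx hψθ hrange hfar, hsign, mul_comm (Real.sign t)]
    linarith [hxt t i]
  · rw [hpt, sum_eq_zero fun j hj => hrange _ _ (hsep i j (ne_of_mem_erase hj).symm).1, add_zero]

/-- Asymptotic linearity of the trajectories of the semiclassical Bethe system:
for `|t| ≥ T` (with `T` dominating `(|yᵢ−yⱼ| + Mᵢ + Mⱼ + ε)/|θᵢ−θⱼ|` for all `i ≠ j`)
all particles are separated by at least `ε`, the sign of `xᵢ(t)−xⱼ(t)` is
`sign(θᵢ−θⱼ)·sign(t)`, and the trajectories are linear with momenta `θ`. -/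
theorem stmt5 (N : ℕ) (ε : ℝ) (hε : 0 < ε)
    (ψ ψx ψθ ψxθ : ℝ → ℝ → ℝ)
    (hC2 : ContDiff ℝ 2 (fun q : ℝ × ℝ => ψ q.1 q.2))
    (hψx : ∀ x t, HasDerivAt (fun x' => ψ x' t) (ψx x t) x)
    (hψθ : ∀ x t, HasDerivAt (fun t' => ψ x t') (ψθ x t) t)
    (hψxθ : ∀ x t, HasDerivAt (fun t' => ψx x t') (ψxθ x t) t)
    (hpos : ∀ x t, 0 ≤ ψxθ x t)
    (hsym : ∀ x t, ψ (-x) (-t) = ψ x t)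
    (hrange : ∀ x t, ε ≤ |x| → ψx x t = 0)
    (y θ : Fin N → ℝ) (hdist : ∀ i j, i ≠ j → θ i ≠ θ j)
    (M : ℝ → ℝ) (hM : ∀ u, M u = ⨆ x : ℝ, |ψθ x u|)
    (Mi : Fin N → ℝ) (hMi : ∀ i, Mi i = ∑ j ∈ Finset.univ.erase i, M (θ i - θ j))
    (T : ℝ)
    (hT : ∀ i j, i ≠ j → (|y i - y j| + Mi i + Mi j + ε) / |θ i - θ j| ≤ T)
    (xt : ℝ → Fin N → ℝ)
    (hxt : ∀ t i, y i + θ i * t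
      = xt t i + ∑ j ∈ Finset.univ.erase i, ψθ (xt t i - xt t j) (θ i - θ j))
    (pt : ℝ → Fin N → ℝ)
    (hpt : ∀ t i, pt t i
      = θ i + ∑ j ∈ Finset.univ.erase i, ψx (xt t i - xt t j) (θ i - θ j)) :
    ∀ t : ℝ, T ≤ |t| →
      (∀ i j, i ≠ j →
        ε ≤ |xt t i - xt t j| ∧
        Real.sign (xt t i - xt t j) = Real.sign (θ i - θ j) * Real.sign t) ∧
      (∀ i, xt t i = y i + θ i * t
          - ∑ j ∈ Finset.univ.erase i,
              ψθ (Real.sign t * Real.sign (θ i - θ j) * ε) (θ i - θ j)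
        ∧ pt t i = θ i) :=
  stmt5_general N ε hε ψ ψx ψθ hC2 hψx hψθ hrange y θ hdist M hM Mi hMi T hT xt hxt pt hpt
end

section
/- Let I, J be a bipartition of {1,…,N} (I ∩ J = ∅, I ∪ J = {1,…,N}) and let (x,p) ∈ ℝ^{2N} be such that |x_i − x_j| > ε for all i ∈ I, j ∈ J. Let θ ∈ ℝ^N be the unique solution of p_i = θ_i + Σ_{j≠i} ψ_x(x_i−x_j, θ_i−θ_j), i = 1,…,N. Then (θ_i)_{i∈I} is the unique solution of the restricted system p_i = θ_i + Σ_{i'∈I, i'≠i} ψ_x(x_i−x_{i'}, θ_i−θ_{i'}) for i ∈ I, and (θ_j)_{j∈J} is the unique solution of the analogous system restricted to J. In particular, if J = {j} is a singleton, then θ_j = p_j. -/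
open Finset

/-- Uniqueness of the restricted system, proved via an argmax monotonicity argument. -/
lemma stmt9_uniq_aux {N : ℕ} (ψx : ℝ → ℝ → ℝ) (mono : ∀ d, Monotone (ψx d))
    (x p : Fin N → ℝ) (I : Finset (Fin N)) (θ θ' : Fin N → ℝ)
    (h1 : ∀ i ∈ I, p i = θ i + ∑ j ∈ I.erase i, ψx (x i - x j) (θ i - θ j))
    (h2 : ∀ i ∈ I, p i = θ' i + ∑ j ∈ I.erase i, ψx (x i - x j) (θ' i - θ' j)) :
    ∀ i ∈ I, θ' i ≤ θ i := by
  intro i hi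
  obtain ⟨i0, hi0, hmax⟩ := I.exists_max_image (fun k => θ' k - θ k) ⟨i, hi⟩
  have key : θ' i0 - θ i0 ≤ 0 := by
    have e1 := h1 i0 hi0
    have e2 := h2 i0 hi0
    have heq : θ' i0 - θ i0 =
        ∑ j ∈ I.erase i0, (ψx (x i0 - x j) (θ i0 - θ j) - ψx (x i0 - x j) (θ' i0 - θ' j)) := by
      rw [Finset.sum_sub_distrib]; linarith
    rw [heq]
    apply Finset.sum_nonpos
    intro j hj
    have hjI : j ∈ I := Finset.mem_of_mem_erase hj
    have h3 : θ i0 - θ j ≤ θ' i0 - θ' j := by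
      have := hmax j hjI; linarith
    have := mono (x i0 - x j) h3
    linarith
  have := hmax i hi
  linarith

/-- Restriction + uniqueness for one group. -/
lemma stmt9_group {N : ℕ} (ε : ℝ) (ψx : ℝ → ℝ → ℝ) (mono : ∀ d, Monotone (ψx d))
    (hrange : ∀ x t, ε ≤ |x| → ψx x t = 0)
    (x p θ : Fin N → ℝ)
    (I J : Finset (Fin N)) (hdisj : Disjoint I J) (hunion : I ∪ J = Finset.univ)
    (hsep : ∀ i ∈ I, ∀ j ∈ J, ε < |x i - x j|)
    (hθ : ∀ i, p i = θ i + ∑ j ∈ Finset.univ.erase i, ψx (x i - x j) (θ i - θ j)) :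
    (∀ i ∈ I, p i = θ i + ∑ j ∈ I.erase i, ψx (x i - x j) (θ i - θ j)) ∧
      ∀ θ' : Fin N → ℝ,
        (∀ i ∈ I, p i = θ' i + ∑ j ∈ I.erase i, ψx (x i - x j) (θ' i - θ' j)) →
        ∀ i ∈ I, θ' i = θ i := by
  have hres : ∀ i ∈ I, p i = θ i + ∑ j ∈ I.erase i, ψx (x i - x j) (θ i - θ j) := by
    intro i hi
    have hiJ : i ∉ J := Finset.disjoint_left.mp hdisj hi
    have hsplit : (Finset.univ.erase i : Finset (Fin N)) = I.erase i ∪ J := by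
      rw [← hunion, Finset.erase_union_distrib, Finset.erase_eq_of_notMem hiJ]
    have hd : Disjoint (I.erase i) J := hdisj.mono_left (Finset.erase_subset _ _)
    have hzero : ∀ j ∈ J, ψx (x i - x j) (θ i - θ j) = 0 := fun j hj =>
      hrange _ _ (le_of_lt (hsep i hi j hj))
    have := hθ i
    rw [hsplit, Finset.sum_union hd, Finset.sum_eq_zero hzero] at this
    linarith
  refine ⟨hres, fun θ' h' i hi => le_antisymm ?_ ?_⟩
  · exact stmt9_uniq_aux ψx mono x p I θ θ' hres h' i hi
  · exact stmt9_uniq_aux ψx mono x p I θ' θ h' hres i hi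

/-- Finite-range property of the asymptotic momenta: if the particles split into two
groups `I, J` separated by more than `ε`, then the asymptotic momenta of each group
solve (uniquely) the system restricted to that group; in particular an isolated
particle `j` has `θⱼ = pⱼ`. -/
theorem stmt9 (N : ℕ) (ε : ℝ) (hε : 0 < ε)
    (ψ ψx ψθ ψxθ : ℝ → ℝ → ℝ)
    (hC2 : ContDiff ℝ 2 (fun q : ℝ × ℝ => ψ q.1 q.2))
    (hψx : ∀ x t, HasDerivAt (fun x' => ψ x' t) (ψx x t) x)
    (hψθ : ∀ x t, HasDerivAt (fun t' => ψ x t') (ψθ x t) t)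
    (hψxθ : ∀ x t, HasDerivAt (fun t' => ψx x t') (ψxθ x t) t)
    (hpos : ∀ x t, 0 ≤ ψxθ x t)
    (hsym : ∀ x t, ψ (-x) (-t) = ψ x t)
    (hrange : ∀ x t, ε ≤ |x| → ψx x t = 0)
    (x p θ : Fin N → ℝ)
    (I J : Finset (Fin N)) (hdisj : Disjoint I J) (hunion : I ∪ J = Finset.univ)
    (hsep : ∀ i ∈ I, ∀ j ∈ J, ε < |x i - x j|)
    (hθ : ∀ i, p i = θ i + ∑ j ∈ Finset.univ.erase i, ψx (x i - x j) (θ i - θ j)) :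
    ((∀ i ∈ I, p i = θ i + ∑ j ∈ I.erase i, ψx (x i - x j) (θ i - θ j)) ∧
      ∀ θ' : Fin N → ℝ,
        (∀ i ∈ I, p i = θ' i + ∑ j ∈ I.erase i, ψx (x i - x j) (θ' i - θ' j)) →
        ∀ i ∈ I, θ' i = θ i) ∧
    ((∀ j ∈ J, p j = θ j + ∑ j' ∈ J.erase j, ψx (x j - x j') (θ j - θ j')) ∧
      ∀ θ' : Fin N → ℝ,
        (∀ j ∈ J, p j = θ' j + ∑ j' ∈ J.erase j, ψx (x j - x j') (θ' j - θ' j')) →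
        ∀ j ∈ J, θ' j = θ j) ∧
    (∀ j : Fin N, J = {j} → θ j = p j) := by
  have mono : ∀ d, Monotone (ψx d) := by
    intro d
    apply monotone_of_deriv_nonneg
    · exact fun t => (hψxθ d t).differentiableAt
    · intro t
      rw [(hψxθ d t).deriv]
      exact hpos d t
  have hI := stmt9_group ε ψx mono hrange x p θ I J hdisj hunion hsep hθ
  have hJ := stmt9_group ε ψx mono hrange x p θ J I hdisj.symm
    (by rw [Finset.union_comm]; exact hunion)
    (fun j hj i hi => by rw [abs_sub_comm]; exact hsep i hi j hj) hθ
  refine ⟨hI, hJ, ?_⟩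
  intro j hJj
  subst hJj
  have := hJ.1 j (Finset.mem_singleton_self j)
  simpa using this.symm
end

section
/- Let Θ : ℝ^{2N} → ℝ^N be the C¹ map assigning to (x,p) the unique solution θ of p_i = θ_i + Σ_{j≠i} ψ_x(x_i−x_j, θ_i−θ_j). Then the components of Θ Poisson-commute: for all i, j ∈ {1,…,N} and all (x,p) ∈ ℝ^{2N}, Σ_{k=1}^N ( ∂Θ_i/∂x_k · ∂Θ_j/∂p_k − ∂Θ_i/∂p_k · ∂Θ_j/∂x_k ) = 0. Consequently, for every a, b ∈ ℕ the conserved quantities Q_a(x,p) = Σ_{i=1}^N Θ_i(x,p)^a satisfy {Q_a, Q_b} = 0, where {·,·} is the canonical Poisson bracket. -/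
/-!
Differentiating `p = Θ + F(x, Θ)` gives `M P = 1` and `M X = -B` for `P = ∂Θ/∂p`, `X = ∂Θ/∂x`,
where `M = 1 + laplacian C`, `B = laplacian A`, and the weights `(A i j, C i j)` are the
gradient of `ψ_x` at `(x_i - x_j, θ_i - θ_j)`. As `ψ` is even, `ψ_x` is odd and its gradient
even, so `A` and `B` are symmetric. Hence `X = -P B`, and the bracket matrix
`X Pᵀ - P Xᵀ = -P B Pᵀ + P Bᵀ Pᵀ` vanishes. The `Q_a` are functions of `Θ`, so their brackets
vanish by the Leibniz rule.
-/

open Finset Matrix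

theorem Function.Odd.fderiv_neg {𝕜 E F : Type*} [NontriviallyNormedField 𝕜]
    [NormedAddCommGroup E] [NormedSpace 𝕜 E] [NormedAddCommGroup F] [NormedSpace 𝕜 F]
    {f : E → F} (hf : f.Odd) {x : E} (hd : DifferentiableAt 𝕜 f (-x)) :
    fderiv 𝕜 f (-x) = fderiv 𝕜 f x := by
  have h : HasFDerivAt (fun y => f (-y)) ((fderiv 𝕜 f (-x)).comp (-ContinuousLinearMap.id 𝕜 E)) x :=
    hd.hasFDerivAt.comp x (-ContinuousLinearMap.id 𝕜 E).hasFDerivAt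
  rw [show (fun y => f (-y)) = fun y => -f y from funext hf] at h
  simpa using h.fun_neg.fderiv.symm

theorem ContinuousLinearMap.apply_pair_eq (ℓ : ℝ × ℝ →L[ℝ] ℝ) (a b : ℝ) :
    ℓ (a, b) = ℓ (1, 0) * a + ℓ (0, 1) * b := by
  rw [show ((a, b) : ℝ × ℝ) = a • (1, 0) + b • (0, 1) by simp, map_add, map_smul, map_smul,
    smul_eq_mul, smul_eq_mul, mul_comm a, mul_comm b]

theorem ContDiff.differentiable_of_hasDerivAt_fst {ψ ψx : ℝ → ℝ → ℝ}
    (hψ : ContDiff ℝ 2 (Function.uncurry ψ)) (hψx : ∀ x t, HasDerivAt (ψ · t) (ψx x t) x) :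
    Differentiable ℝ (Function.uncurry ψx) := by
  have h : Function.uncurry ψx = fun p => fderiv ℝ (Function.uncurry ψ) p (1, 0) := by
    funext ⟨x, t⟩
    exact (hψx x t).unique <|
      (hψ.differentiable two_ne_zero (x, t)).hasFDerivAt.comp_hasDerivAt (l := Function.uncurry ψ) x
        ((hasDerivAt_id x).prodMk (hasDerivAt_const x t))
  rw [h]
  exact ((hψ.fderiv_right le_rfl).clm_apply contDiff_const).differentiable one_ne_zero

theorem Function.Even.odd_of_hasDerivAt_fst {ψ ψx : ℝ → ℝ → ℝ}
    (hψ : (Function.uncurry ψ).Even) (hψx : ∀ x t, HasDerivAt (ψ · t) (ψx x t) x) :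
    (Function.uncurry ψx).Odd := by
  rintro ⟨x, t⟩
  have h := (hψx (-x) (-t)).comp x (hasDerivAt_neg x)
  rw [show (fun x' => ψ x' (-t)) ∘ Neg.neg = (ψ · t) from funext fun y => hψ (y, t)] at h
  simp [(hψx x t).unique h]

namespace Matrix

variable {n R : Type*} [Fintype n] [DecidableEq n] [CommRing R]

def laplacian (a : Matrix n n R) : Matrix n n R :=
  diagonal (fun i => ∑ j, a i j) - a

theorem laplacian_mulVec_apply (a : Matrix n n R) (u : n → R) (i : n) :
    (laplacian a *ᵥ u) i = ∑ j, a i j * (u i - u j) := by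
  rw [laplacian, sub_mulVec, Pi.sub_apply, mulVec_diagonal]
  simp [mulVec, dotProduct, mul_sub, sum_mul]

theorem IsSymm.laplacian {a : Matrix n n R} (ha : a.IsSymm) : (laplacian a).IsSymm :=
  (isSymm_diagonal _).sub ha

theorem isSymm_mul_transpose_of_mul_eq_one {M P X : Matrix n n R} (hP : M * P = 1)
    (hX : (M * X).IsSymm) : (X * Pᵀ).IsSymm := by
  have hXP : X * Pᵀ = P * (M * X) * Pᵀ := by
    rw [← Matrix.mul_assoc P, mul_eq_one_comm.mp hP, Matrix.one_mul]
  rw [hXP, IsSymm, transpose_mul, transpose_mul, hX.eq, transpose_transpose]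
  simp only [Matrix.mul_assoc]

theorem isSymm_of_mulVec_constraint {M A : Matrix n n R} (hA : A.IsSymm)
    (J : (n → R) × (n → R) → n → R) (hJ : ∀ v, v.2 = M *ᵥ J v + A *ᵥ v.1) :
    (of (fun i k => J (Pi.single k 1, 0) i) * (of fun i k => J (0, Pi.single k 1) i)ᵀ).IsSymm := by
  refine isSymm_mul_transpose_of_mul_eq_one (M := M) ?_ ?_
  · ext i k
    simpa [mul_apply, mulVec, dotProduct, one_apply, Pi.single_apply, eq_comm]
      using (congrFun (hJ (0, Pi.single k 1)) i).symm
  · have h : M * of (fun i k => J (Pi.single k 1, 0) i) = -A := by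
      ext i k
      have hk := congrFun (hJ (Pi.single k 1, 0)) i
      simp only [Pi.zero_apply, Pi.add_apply, mulVec_single_one, col_apply, mulVec, dotProduct]
        at hk
      simp only [mul_apply, of_apply, neg_apply]
      linear_combination -hk
    exact h ▸ hA.neg

end Matrix

section PhaseSpace

variable {n : Type*} [Fintype n] [DecidableEq n]

/-- In coordinates `q = (x, p)`, the canonical Poisson bracket is
`{f, g}(q) = poissonForm (fderiv ℝ f q) (fderiv ℝ g q)`. -/
def poissonForm :
    ((n → ℝ) × (n → ℝ) →L[ℝ] ℝ) →ₗ[ℝ] ((n → ℝ) × (n → ℝ) →L[ℝ] ℝ) →ₗ[ℝ] ℝ :=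
  LinearMap.mk₂ ℝ
    (fun L₁ L₂ => ∑ k, (L₁ (Pi.single k 1, 0) * L₂ (0, Pi.single k 1)
      - L₁ (0, Pi.single k 1) * L₂ (Pi.single k 1, 0)))
    (fun _ _ _ => by
      simp only [_root_.add_apply, ← sum_add_distrib]; exact sum_congr rfl fun _ _ => by ring)
    (fun _ _ _ => by
      simp only [_root_.smul_apply, smul_eq_mul, mul_sum]; exact sum_congr rfl fun _ _ => by ring)
    (fun _ _ _ => by
      simp only [_root_.add_apply, ← sum_add_distrib]; exact sum_congr rfl fun _ _ => by ring)
    (fun _ _ _ => by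
      simp only [_root_.smul_apply, smul_eq_mul, mul_sum]; exact sum_congr rfl fun _ _ => by ring)

theorem poissonForm_apply (L₁ L₂ : (n → ℝ) × (n → ℝ) →L[ℝ] ℝ) :
    poissonForm L₁ L₂ = ∑ k, (L₁ (Pi.single k 1, 0) * L₂ (0, Pi.single k 1)
      - L₁ (0, Pi.single k 1) * L₂ (Pi.single k 1, 0)) :=
  rfl

theorem poissonForm_eq_zero_of_mulVec_constraint {M A : Matrix n n ℝ} (hA : A.IsSymm)
    (L : n → (n → ℝ) × (n → ℝ) →L[ℝ] ℝ) (hL : ∀ v, v.2 = M *ᵥ (fun i => L i v) + A *ᵥ v.1)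
    (i j : n) : poissonForm (L i) (L j) = 0 := by
  have h := (isSymm_of_mulVec_constraint hA _ hL).apply i j
  simp only [mul_apply, transpose_apply, of_apply] at h
  rw [poissonForm_apply, sum_sub_distrib, ← h, sub_eq_zero]
  exact sum_congr rfl fun _ _ => mul_comm _ _

end PhaseSpace

section PairwiseConstraint

variable {n : Type*} [Fintype n] [DecidableEq n]

theorem fderiv_pairwise_constraint {φ : ℝ × ℝ → ℝ} (hφ : Differentiable ℝ φ)
    {Θ : (n → ℝ) × (n → ℝ) → n → ℝ}
    (hΘ : ∀ q i, q.2 i = Θ q i + ∑ j ∈ univ.erase i, φ (q.1 i - q.1 j, Θ q i - Θ q j))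
    {q : (n → ℝ) × (n → ℝ)} (hΘd : ∀ i, DifferentiableAt ℝ (fun q' => Θ q' i) q)
    (v : (n → ℝ) × (n → ℝ)) (i : n) :
    v.2 i = fderiv ℝ (fun q' => Θ q' i) q v + ∑ j ∈ univ.erase i,
      fderiv ℝ φ (q.1 i - q.1 j, Θ q i - Θ q j)
        (v.1 i - v.1 j, fderiv ℝ (fun q' => Θ q' i) q v - fderiv ℝ (fun q' => Θ q' j) q v) := by
  set γ : ℝ → (n → ℝ) × (n → ℝ) := fun t => q + t • v
  have hγ0 : γ 0 = q := by simp [γ]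
  have hγ : HasDerivAt γ v 0 := by
    simpa [γ] using ((hasDerivAt_id (0 : ℝ)).smul_const v).const_add q
  have hx : ∀ k, HasDerivAt (fun t => (γ t).1 k) (v.1 k) 0 := fun k =>
    ((ContinuousLinearMap.proj (R := ℝ) (φ := fun _ : n => ℝ) k).comp
      (ContinuousLinearMap.fst ℝ (n → ℝ) (n → ℝ))).hasFDerivAt.comp_hasDerivAt 0 hγ
  have hθ : ∀ k, HasDerivAt (fun t => Θ (γ t) k) (fderiv ℝ (fun q' => Θ q' k) q v) 0 := fun k =>
    (hΘd k).hasFDerivAt.comp_hasDerivAt_of_eq 0 hγ hγ0.symm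
  have hp : HasDerivAt (fun t => (γ t).2 i) (v.2 i) 0 :=
    ((ContinuousLinearMap.proj (R := ℝ) (φ := fun _ : n => ℝ) i).comp
      (ContinuousLinearMap.snd ℝ (n → ℝ) (n → ℝ))).hasFDerivAt.comp_hasDerivAt 0 hγ
  rw [funext fun t => hΘ (γ t) i] at hp
  refine hp.unique ((hθ i).add (HasDerivAt.fun_sum fun j _ => ?_))
  exact (hφ _).hasFDerivAt.comp_hasDerivAt_of_eq 0 (((hx i).sub (hx j)).prodMk ((hθ i).sub (hθ j)))
    (by rw [hγ0])

theorem poissonForm_fderiv_eq_zero_of_pairwise_constraint {φ : ℝ × ℝ → ℝ}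
    (hφ : Differentiable ℝ φ) (hφodd : φ.Odd) {Θ : (n → ℝ) × (n → ℝ) → n → ℝ}
    (hΘ : ∀ q i, q.2 i = Θ q i + ∑ j ∈ univ.erase i, φ (q.1 i - q.1 j, Θ q i - Θ q j))
    {q : (n → ℝ) × (n → ℝ)} (hΘd : ∀ i, DifferentiableAt ℝ (fun q' => Θ q' i) q) (i j : n) :
    poissonForm (fderiv ℝ (fun q' => Θ q' i) q) (fderiv ℝ (fun q' => Θ q' j) q) = 0 := by
  set D : n → n → ℝ × ℝ →L[ℝ] ℝ := fun i j => fderiv ℝ φ (q.1 i - q.1 j, Θ q i - Θ q j)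
  have hD : ∀ i j, D j i = D i j := fun i j => by
    simpa only [D, Prod.neg_mk, neg_sub] using
      hφodd.fderiv_neg (x := (q.1 i - q.1 j, Θ q i - Θ q j)) (hφ _)
  set A : Matrix n n ℝ := of fun i j => D i j (1, 0)
  set C : Matrix n n ℝ := of fun i j => D i j (0, 1)
  have hA : A.IsSymm := IsSymm.ext fun i j => by simp only [A, of_apply, hD]
  refine poissonForm_eq_zero_of_mulVec_constraint (M := 1 + C.laplacian) hA.laplacian
    (fun i => fderiv ℝ (fun q' => Θ q' i) q) (fun v => funext fun k => ?_) i j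
  rw [fderiv_pairwise_constraint hφ hΘ hΘd v k,
    sum_erase univ (by simp only [sub_self, Prod.mk_zero_zero, map_zero])]
  simp only [Pi.add_apply, add_mulVec, one_mulVec, laplacian_mulVec_apply]
  simp only [ContinuousLinearMap.apply_pair_eq _ (v.1 k - _), sum_add_distrib, A, C, D, of_apply]
  ring

end PairwiseConstraint

theorem stmt10_general (N : ℕ)
    (ψ ψx : ℝ → ℝ → ℝ)
    (hC2 : ContDiff ℝ 2 (fun q : ℝ × ℝ => ψ q.1 q.2))
    (hψx : ∀ x t, HasDerivAt (fun x' => ψ x' t) (ψx x t) x)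
    (hsym : ∀ x t, ψ (-x) (-t) = ψ x t)
    (Θ : (Fin N → ℝ) × (Fin N → ℝ) → Fin N → ℝ)
    (hΘC1 : ContDiff ℝ 1 Θ)
    (hΘ : ∀ (q : (Fin N → ℝ) × (Fin N → ℝ)) (i : Fin N),
      q.2 i = Θ q i + ∑ j ∈ Finset.univ.erase i,
        ψx (q.1 i - q.1 j) (Θ q i - Θ q j)) :
    (∀ (i j : Fin N) (q : (Fin N → ℝ) × (Fin N → ℝ)),
      ∑ k : Fin N,
        (fderiv ℝ (fun q' => Θ q' i) q ((Pi.single k 1 : Fin N → ℝ), (0 : Fin N → ℝ))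
            * fderiv ℝ (fun q' => Θ q' j) q ((0 : Fin N → ℝ), (Pi.single k 1 : Fin N → ℝ))
          - fderiv ℝ (fun q' => Θ q' i) q ((0 : Fin N → ℝ), (Pi.single k 1 : Fin N → ℝ))
            * fderiv ℝ (fun q' => Θ q' j) q ((Pi.single k 1 : Fin N → ℝ), (0 : Fin N → ℝ)))
        = 0) ∧
    (∀ (a b : ℕ) (q : (Fin N → ℝ) × (Fin N → ℝ)),
      ∑ k : Fin N,
        (fderiv ℝ (fun q' => ∑ i, Θ q' i ^ a) q ((Pi.single k 1 : Fin N → ℝ), (0 : Fin N → ℝ))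
            * fderiv ℝ (fun q' => ∑ i, Θ q' i ^ b) q ((0 : Fin N → ℝ), (Pi.single k 1 : Fin N → ℝ))
          - fderiv ℝ (fun q' => ∑ i, Θ q' i ^ a) q ((0 : Fin N → ℝ), (Pi.single k 1 : Fin N → ℝ))
            * fderiv ℝ (fun q' => ∑ i, Θ q' i ^ b) q ((Pi.single k 1 : Fin N → ℝ), (0 : Fin N → ℝ)))
        = 0) := by
  have hΘd : ∀ i, Differentiable ℝ (fun q => Θ q i) :=
    differentiable_pi.1 (hΘC1.differentiable one_ne_zero)
  have hbracket : ∀ i j q, poissonForm (fderiv ℝ (fun q' => Θ q' i) q)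
      (fderiv ℝ (fun q' => Θ q' j) q) = 0 := fun i j q =>
    poissonForm_fderiv_eq_zero_of_pairwise_constraint (hC2.differentiable_of_hasDerivAt_fst hψx)
      (Function.Even.odd_of_hasDerivAt_fst (fun p => hsym p.1 p.2) hψx) hΘ (fun i => hΘd i q) i j
  have hQ : ∀ (a : ℕ) q, fderiv ℝ (fun q' => ∑ i, Θ q' i ^ a) q
      = ∑ i, ((a : ℝ) * Θ q i ^ (a - 1)) • fderiv ℝ (fun q' => Θ q' i) q := fun a q =>
    (HasFDerivAt.fun_sum fun i _ =>
      (hasDerivAt_pow a _).comp_hasFDerivAt q (hΘd i q).hasFDerivAt).fderiv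
  refine ⟨hbracket, fun a b q => ?_⟩
  rw [← poissonForm_apply, hQ, hQ]
  simp [hbracket]

/-- The asymptotic momenta Poisson-commute: the components of the `C¹` map
`Θ : (x,p) ↦ θ` have vanishing canonical Poisson brackets, and so do the
conserved quantities `Q_a = ∑ᵢ Θᵢᵃ`. -/
theorem stmt10 (N : ℕ) (ε : ℝ) (hε : 0 < ε)
    (ψ ψx ψθ ψxθ : ℝ → ℝ → ℝ)
    (hC2 : ContDiff ℝ 2 (fun q : ℝ × ℝ => ψ q.1 q.2))
    (hψx : ∀ x t, HasDerivAt (fun x' => ψ x' t) (ψx x t) x)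
    (hψθ : ∀ x t, HasDerivAt (fun t' => ψ x t') (ψθ x t) t)
    (hψxθ : ∀ x t, HasDerivAt (fun t' => ψx x t') (ψxθ x t) t)
    (hpos : ∀ x t, 0 ≤ ψxθ x t)
    (hsym : ∀ x t, ψ (-x) (-t) = ψ x t)
    (hrange : ∀ x t, ε ≤ |x| → ψx x t = 0)
    (Θ : (Fin N → ℝ) × (Fin N → ℝ) → Fin N → ℝ)
    (hΘC1 : ContDiff ℝ 1 Θ)
    (hΘ : ∀ (q : (Fin N → ℝ) × (Fin N → ℝ)) (i : Fin N),
      q.2 i = Θ q i + ∑ j ∈ Finset.univ.erase i,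
        ψx (q.1 i - q.1 j) (Θ q i - Θ q j)) :
    (∀ (i j : Fin N) (q : (Fin N → ℝ) × (Fin N → ℝ)),
      ∑ k : Fin N,
        (fderiv ℝ (fun q' => Θ q' i) q ((Pi.single k 1 : Fin N → ℝ), (0 : Fin N → ℝ))
            * fderiv ℝ (fun q' => Θ q' j) q ((0 : Fin N → ℝ), (Pi.single k 1 : Fin N → ℝ))
          - fderiv ℝ (fun q' => Θ q' i) q ((0 : Fin N → ℝ), (Pi.single k 1 : Fin N → ℝ))
            * fderiv ℝ (fun q' => Θ q' j) q ((Pi.single k 1 : Fin N → ℝ), (0 : Fin N → ℝ)))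
        = 0) ∧
    (∀ (a b : ℕ) (q : (Fin N → ℝ) × (Fin N → ℝ)),
      ∑ k : Fin N,
        (fderiv ℝ (fun q' => ∑ i, Θ q' i ^ a) q ((Pi.single k 1 : Fin N → ℝ), (0 : Fin N → ℝ))
            * fderiv ℝ (fun q' => ∑ i, Θ q' i ^ b) q ((0 : Fin N → ℝ), (Pi.single k 1 : Fin N → ℝ))
          - fderiv ℝ (fun q' => ∑ i, Θ q' i ^ a) q ((0 : Fin N → ℝ), (Pi.single k 1 : Fin N → ℝ))
            * fderiv ℝ (fun q' => ∑ i, Θ q' i ^ b) q ((Pi.single k 1 : Fin N → ℝ), (0 : Fin N → ℝ)))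
        = 0) :=
  stmt10_general N ψ ψx hC2 hψx hsym Θ hΘC1 hΘ
end

section
/- Let ω : (y,θ) ↦ (x,p) be the C¹ diffeomorphism of ℝ^{2N} defined by solving y_i = x_i + Σ_{j≠i} ψ_θ(x_i−x_j, θ_i−θ_j) for x and setting p_i = θ_i + Σ_{j≠i} ψ_x(x_i−x_j, θ_i−θ_j), and write ω^{−1}(x,p) = (Y(x,p), Θ(x,p)). Then (Y,Θ) are canonical coordinates: for all i,j, {Y_i, Θ_j} = δ_{ij}, {Y_i, Y_j} = 0, and {Θ_i, Θ_j} = 0, where {f,g} = Σ_k (∂f/∂x_k ∂g/∂p_k − ∂f/∂p_k ∂g/∂x_k) is the canonical Poisson bracket on ℝ^{2N}. -/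
/-!
`(Y, Θ)` is the map generated by `Φ(x, θ) = ⟨x, θ⟩ + ½ ∑_{i ≠ j} ψ(xᵢ - xⱼ, θᵢ - θⱼ)`: `p = Φₓ(x, Θ)`
and `Y = Φ_θ(x, Θ)`. Differentiating these identities expresses the Jacobian blocks
`a = ∂Θ/∂x`, `b = ∂Θ/∂p`, `u = ∂Y/∂x`, `v = ∂Y/∂p` through the Hessian blocks `A = Φₓₓ`,
`B = Φₓθ`, `C = Φθθ`: `B a = -A`, `B b = 1`, `u = Bᵀ + C a`, `v = C b`. Because ψ is even, so is its
Hessian, so `A`, `C` and `B - 1` are graph Laplacians with symmetric weights; the bracket relations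
`u bᵀ - v aᵀ = 1`, `u vᵀ - v uᵀ = 0`, `a bᵀ - b aᵀ = 0` then follow by matrix algebra.
-/

open Finset Matrix

section Calculus

variable {𝕜 : Type*} [NontriviallyNormedField 𝕜]
  {E F G : Type*} [NormedAddCommGroup E] [NormedSpace 𝕜 E]
  [NormedAddCommGroup F] [NormedSpace 𝕜 F] [NormedAddCommGroup G] [NormedSpace 𝕜 G]

theorem fderiv_comp_neg (f : E → F) (x : E) :
    fderiv 𝕜 (fun y => f (-y)) x = -fderiv 𝕜 f (-x) := by
  ext v
  simpa [Function.comp_def] using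
    congrArg (· v) ((ContinuousLinearEquiv.neg 𝕜 : E ≃L[𝕜] E).comp_right_fderiv (f := f) (x := x))

theorem fderiv_fderiv_neg_of_even {f : E → F} (hf : ∀ x, f (-x) = f x) (x : E) :
    fderiv 𝕜 (fderiv 𝕜 f) (-x) = fderiv 𝕜 (fderiv 𝕜 f) x := by
  have hodd : fderiv 𝕜 f = fun y => -fderiv 𝕜 f (-y) := by
    funext y
    simpa only [hf] using fderiv_comp_neg (𝕜 := 𝕜) f y
  calc fderiv 𝕜 (fderiv 𝕜 f) (-x) = -fderiv 𝕜 (fun y => fderiv 𝕜 f (-y)) x := by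
        rw [fderiv_comp_neg, neg_neg]
    _ = fderiv 𝕜 (fun y => -fderiv 𝕜 f (-y)) x := fderiv_fun_neg.symm
    _ = fderiv 𝕜 (fderiv 𝕜 f) x := by rw [← hodd]

theorem HasFDerivAt.fderiv_apply_comp [IsRCLikeNormedField 𝕜] {Ψ : E → G}
    (hΨ : ContDiff 𝕜 2 Ψ) (e : E) {ζ : F → E} {ζ' : F →L[𝕜] E} {x : F}
    (hζ : HasFDerivAt ζ ζ' x) :
    HasFDerivAt (fun y => fderiv 𝕜 Ψ (ζ y) e) ((fderiv 𝕜 (fderiv 𝕜 Ψ) (ζ x) e).comp ζ') x := by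
  have hΨ' : HasFDerivAt (fderiv 𝕜 Ψ) (fderiv 𝕜 (fderiv 𝕜 Ψ) (ζ x)) (ζ x) :=
    ((hΨ.fderiv_right (m := 1) le_rfl).differentiable one_ne_zero _).hasFDerivAt
  have hsymm := hΨ.contDiffAt.isSymmSndFDerivAt (x := ζ x) (by simp)
  refine ((hΨ'.comp x hζ).clm_apply (hasFDerivAt_const e x)).congr_fderiv ?_
  ext v
  simp [hsymm.eq]

theorem ContinuousLinearMap.apply_pair (L : 𝕜 × 𝕜 →L[𝕜] G) (s t : 𝕜) :
    L (s, t) = s • L (1, 0) + t • L (0, 1) := by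
  rw [← map_smul, ← map_smul, ← map_add]
  simp

theorem DifferentiableAt.hasDerivAt_partial_fst {f : 𝕜 × 𝕜 → G} {x t : 𝕜}
    (hf : DifferentiableAt 𝕜 f (x, t)) :
    HasDerivAt (fun s => f (s, t)) (fderiv 𝕜 f (x, t) (1, 0)) x :=
  hf.hasFDerivAt.comp_hasDerivAt x ((hasDerivAt_id x).prodMk (hasDerivAt_const x t))

theorem DifferentiableAt.hasDerivAt_partial_snd {f : 𝕜 × 𝕜 → G} {x t : 𝕜}
    (hf : DifferentiableAt 𝕜 f (x, t)) :
    HasDerivAt (fun s => f (x, s)) (fderiv 𝕜 f (x, t) (0, 1)) t :=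
  hf.hasFDerivAt.comp_hasDerivAt t ((hasDerivAt_const t x).prodMk (hasDerivAt_id t))

end Calculus

section Laplacian

variable {ι R : Type*} [Fintype ι] [DecidableEq ι] [CommRing R]

def weightedLaplacian (c : ι → ι → R) : Matrix ι ι R :=
  diagonal (fun i => ∑ j, c i j) - of c

theorem weightedLaplacian_mulVec (c : ι → ι → R) (v : ι → R) (i : ι) :
    (weightedLaplacian c *ᵥ v) i = ∑ j ∈ univ.erase i, c i j * (v i - v j) := by
  rw [Finset.sum_erase _ (by simp), weightedLaplacian, sub_mulVec, Pi.sub_apply, mulVec_diagonal]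
  simp [mulVec, dotProduct, mul_sub, Finset.sum_mul]

theorem weightedLaplacian_transpose {c : ι → ι → R} (hc : ∀ i j, c i j = c j i) :
    (weightedLaplacian c)ᵀ = weightedLaplacian c := by
  have : (of c)ᵀ = of c := by ext i j; exact hc j i
  simp [weightedLaplacian, transpose_sub, this]

end Laplacian

theorem Matrix.symplectic_relations_of_generating {ι R : Type*} [Fintype ι] [DecidableEq ι] [CommRing R]
    {A B C a b u v : Matrix ι ι R} (hA : Aᵀ = A) (hC : Cᵀ = C)
    (ha : B * a = -A) (hb : B * b = 1) (hu : u = Bᵀ + C * a) (hv : v = C * b) :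
    u * bᵀ - v * aᵀ = 1 ∧ u * vᵀ - v * uᵀ = 0 ∧ a * bᵀ - b * aᵀ = 0 := by
  have hb' : b * B = 1 := mul_eq_one_comm.mp hb
  have ha' : a = -(b * A) := by
    rw [← Matrix.mul_neg, ← ha, ← Matrix.mul_assoc, hb', Matrix.one_mul]
  have hbT : Bᵀ * bᵀ = 1 := by rw [← transpose_mul, hb', transpose_one]
  subst hu hv ha'
  simp only [transpose_neg, transpose_mul, transpose_add, hA, hC, transpose_transpose]
  refine ⟨?_, ?_, ?_⟩
  · calc _ = Bᵀ * bᵀ := by noncomm_ring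
      _ = 1 := hbT
  · calc _ = Bᵀ * bᵀ * C - C * (b * B) := by noncomm_ring
      _ = 0 := by rw [hbT, hb', Matrix.one_mul, Matrix.mul_one, sub_self]
  · noncomm_ring

section PairInteraction

variable {ι F : Type*} [Fintype ι] [DecidableEq ι] [NormedAddCommGroup F] [NormedSpace ℝ F]
  (Ψ : ℝ × ℝ → ℝ)

noncomputable def pairForce (e : ℝ × ℝ) (x θ : ι → ℝ) : ι → ℝ :=
  fun k => ∑ l ∈ univ.erase k, fderiv ℝ Ψ (x k - x l, θ k - θ l) e

noncomputable def pairLaplacian (e e' : ℝ × ℝ) (x θ : ι → ℝ) : Matrix ι ι ℝ :=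
  weightedLaplacian fun k l => fderiv ℝ (fderiv ℝ Ψ) (x k - x l, θ k - θ l) e e'

variable {Ψ}

theorem pairLaplacian_transpose (hΨ : ∀ z, Ψ (-z) = Ψ z) (e e' : ℝ × ℝ) (x θ : ι → ℝ) :
    (pairLaplacian Ψ e e' x θ)ᵀ = pairLaplacian Ψ e e' x θ := by
  refine weightedLaplacian_transpose fun k l => ?_
  rw [← fderiv_fderiv_neg_of_even hΨ, Prod.neg_mk, neg_sub, neg_sub]

theorem pairLaplacian_comm (hΨ : ContDiff ℝ 2 Ψ) (e e' : ℝ × ℝ) (x θ : ι → ℝ) :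
    pairLaplacian Ψ e' e x θ = pairLaplacian Ψ e e' x θ := by
  simp only [pairLaplacian, (hΨ.contDiffAt.isSymmSndFDerivAt (by simp)).eq e']

theorem HasFDerivAt.pairForce (hΨ : ContDiff ℝ 2 Ψ) (e : ℝ × ℝ) {X Θ : F → ι → ℝ}
    {X' Θ' : F →L[ℝ] ι → ℝ} {y : F} (hX : HasFDerivAt X X' y) (hΘ : HasFDerivAt Θ Θ' y) :
    HasFDerivAt (fun y => pairForce Ψ e (X y) (Θ y))
      ((LinearMap.toContinuousLinearMap (pairLaplacian Ψ e (1, 0) (X y) (Θ y)).mulVecLin).comp X'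
        + (LinearMap.toContinuousLinearMap
            (pairLaplacian Ψ e (0, 1) (X y) (Θ y)).mulVecLin).comp Θ') y := by
  refine hasFDerivAt_pi'' fun k => ?_
  have hXk := fun k => hasFDerivAt_pi'.1 hX k
  have hΘk := fun k => hasFDerivAt_pi'.1 hΘ k
  refine (HasFDerivAt.fun_sum fun l _ => HasFDerivAt.fderiv_apply_comp hΨ e
    (((hXk k).fun_sub (hXk l)).prodMk ((hΘk k).fun_sub (hΘk l)))).congr_fderiv ?_
  ext w
  simp only [pairLaplacian, _root_.add_apply, ContinuousLinearMap.comp_apply,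
    LinearMap.coe_toContinuousLinearMap', mulVecLin_apply, ContinuousLinearMap.proj_apply,
    Pi.add_apply, weightedLaplacian_mulVec, ← Finset.sum_add_distrib, _root_.sum_apply]
  refine Finset.sum_congr rfl fun l _ => ?_
  rw [ContinuousLinearMap.apply_pair]
  simp [mul_comm]

end PairInteraction

section Jacobian

variable {ι : Type*} [Fintype ι] [DecidableEq ι]

noncomputable def jacobianX (f : (ι → ℝ) × (ι → ℝ) → ι → ℝ) (q : (ι → ℝ) × (ι → ℝ)) :
    Matrix ι ι ℝ :=
  of fun i k => fderiv ℝ (fun q' => f q' i) q (Pi.single k 1, 0)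

noncomputable def jacobianP (f : (ι → ℝ) × (ι → ℝ) → ι → ℝ) (q : (ι → ℝ) × (ι → ℝ)) :
    Matrix ι ι ℝ :=
  of fun i k => fderiv ℝ (fun q' => f q' i) q (0, Pi.single k 1)

variable {f : (ι → ℝ) × (ι → ℝ) → ι → ℝ} {q : (ι → ℝ) × (ι → ℝ)}

theorem jacobianX_mulVec (hf : DifferentiableAt ℝ f q) (v : ι → ℝ) :
    jacobianX f q *ᵥ v = fderiv ℝ f q (v, 0) := by
  have : jacobianX f q =
      LinearMap.toMatrix' ((fderiv ℝ f q).comp (ContinuousLinearMap.inl ℝ _ _)).toLinearMap := by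
    ext i k
    simp [jacobianX, LinearMap.toMatrix'_apply, fderiv_apply hf]
  rw [this, LinearMap.toMatrix'_mulVec]
  rfl

theorem jacobianP_mulVec (hf : DifferentiableAt ℝ f q) (v : ι → ℝ) :
    jacobianP f q *ᵥ v = fderiv ℝ f q (0, v) := by
  have : jacobianP f q =
      LinearMap.toMatrix' ((fderiv ℝ f q).comp (ContinuousLinearMap.inr ℝ _ _)).toLinearMap := by
    ext i k
    simp [jacobianP, LinearMap.toMatrix'_apply, fderiv_apply hf]
  rw [this, LinearMap.toMatrix'_mulVec]
  rfl

noncomputable def poissonMatrix (f g : (ι → ℝ) × (ι → ℝ) → ι → ℝ) (q : (ι → ℝ) × (ι → ℝ)) :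
    Matrix ι ι ℝ :=
  jacobianX f q * (jacobianP g q)ᵀ - jacobianP f q * (jacobianX g q)ᵀ

theorem poissonMatrix_apply (f g : (ι → ℝ) × (ι → ℝ) → ι → ℝ) (q : (ι → ℝ) × (ι → ℝ))
    (i j : ι) :
    poissonMatrix f g q i j = ∑ k, (fderiv ℝ (fun q' => f q' i) q (Pi.single k 1, 0)
        * fderiv ℝ (fun q' => g q' j) q (0, Pi.single k 1)
      - fderiv ℝ (fun q' => f q' i) q (0, Pi.single k 1)
        * fderiv ℝ (fun q' => g q' j) q (Pi.single k 1, 0)) := by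
  simp [poissonMatrix, jacobianX, jacobianP, mul_apply, Finset.sum_sub_distrib]

end Jacobian

section Canonical

variable {ι : Type*} [Fintype ι] [DecidableEq ι] {Ψ : ℝ × ℝ → ℝ}
  {Y Θ : (ι → ℝ) × (ι → ℝ) → ι → ℝ} {q : (ι → ℝ) × (ι → ℝ)}

theorem snd_eq_of_momentum_equation (hΨ : ContDiff ℝ 2 Ψ) (hΘ : DifferentiableAt ℝ Θ q)
    (hp : ∀ q, q.2 = Θ q + pairForce Ψ (1, 0) q.1 (Θ q)) (w : (ι → ℝ) × (ι → ℝ)) :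
    w.2 = fderiv ℝ Θ q w + pairLaplacian Ψ (1, 0) (1, 0) q.1 (Θ q) *ᵥ w.1
      + pairLaplacian Ψ (1, 0) (0, 1) q.1 (Θ q) *ᵥ fderiv ℝ Θ q w := by
  have h := hΘ.hasFDerivAt.fun_add (hasFDerivAt_fst.pairForce hΨ (1, 0) hΘ.hasFDerivAt)
  rw [← funext hp] at h
  simpa [add_assoc] using congrArg (· w) (hasFDerivAt_snd.unique h)

theorem fderiv_eq_of_position_equation (hΨ : ContDiff ℝ 2 Ψ) (hΘ : DifferentiableAt ℝ Θ q)
    (hY : ∀ q, Y q = q.1 + pairForce Ψ (0, 1) q.1 (Θ q)) (w : (ι → ℝ) × (ι → ℝ)) :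
    fderiv ℝ Y q w = w.1 + pairLaplacian Ψ (1, 0) (0, 1) q.1 (Θ q) *ᵥ w.1
      + pairLaplacian Ψ (0, 1) (0, 1) q.1 (Θ q) *ᵥ fderiv ℝ Θ q w := by
  have h := hasFDerivAt_fst.fun_add (hasFDerivAt_fst.pairForce hΨ (0, 1) hΘ.hasFDerivAt)
  rw [← funext hY] at h
  simp [h.fderiv, pairLaplacian_comm hΨ (1, 0) (0, 1), add_assoc]

theorem poissonMatrix_canonical (hΨ : ContDiff ℝ 2 Ψ) (heven : ∀ z, Ψ (-z) = Ψ z)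
    (hΘ : DifferentiableAt ℝ Θ q)
    (hY : ∀ q, Y q = q.1 + pairForce Ψ (0, 1) q.1 (Θ q))
    (hp : ∀ q, q.2 = Θ q + pairForce Ψ (1, 0) q.1 (Θ q)) :
    poissonMatrix Y Θ q = 1 ∧ poissonMatrix Y Y q = 0 ∧ poissonMatrix Θ Θ q = 0 := by
  have hYd : DifferentiableAt ℝ Y q := by
    rw [funext hY]
    exact differentiableAt_fst.add
      (hasFDerivAt_fst.pairForce hΨ (0, 1) hΘ.hasFDerivAt).differentiableAt
  have hmom := snd_eq_of_momentum_equation hΨ hΘ hp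
  have hpos := fderiv_eq_of_position_equation hΨ hΘ hY
  set R := pairLaplacian Ψ (1, 0) (1, 0) q.1 (Θ q)
  set S := pairLaplacian Ψ (1, 0) (0, 1) q.1 (Θ q)
  set T := pairLaplacian Ψ (0, 1) (0, 1) q.1 (Θ q)
  have hB : (1 + S)ᵀ = 1 + S := by
    rw [transpose_add, transpose_one, pairLaplacian_transpose heven]
  refine Matrix.symplectic_relations_of_generating (A := R) (B := 1 + S) (C := T)
    (pairLaplacian_transpose heven _ _ _ _) (pairLaplacian_transpose heven _ _ _ _)
    ?_ ?_ ?_ ?_ <;> rw [ext_iff_mulVec] <;> intro v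
  · simp only [add_mulVec, ← mulVec_mulVec, one_mulVec, neg_mulVec, jacobianX_mulVec hΘ]
    linear_combination -hmom (v, 0)
  · have h := hmom (0, v)
    simp only [add_mulVec, ← mulVec_mulVec, one_mulVec, jacobianP_mulVec hΘ, mulVec_zero,
      add_zero] at h ⊢
    exact h.symm
  · simp only [hB, add_mulVec, ← mulVec_mulVec, one_mulVec, jacobianX_mulVec hΘ,
      jacobianX_mulVec hYd]
    linear_combination hpos (v, 0)
  · have h := hpos (0, v)
    simp only [← mulVec_mulVec, jacobianP_mulVec hΘ, jacobianP_mulVec hYd, mulVec_zero,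
      zero_add] at h ⊢
    exact h

end Canonical

theorem stmt11_general (N : ℕ) (ψ ψx ψθ : ℝ → ℝ → ℝ)
    (hC2 : ContDiff ℝ 2 (fun q : ℝ × ℝ => ψ q.1 q.2))
    (hψx : ∀ x t, HasDerivAt (fun x' => ψ x' t) (ψx x t) x)
    (hψθ : ∀ x t, HasDerivAt (fun t' => ψ x t') (ψθ x t) t)
    (hsym : ∀ x t, ψ (-x) (-t) = ψ x t)
    (ω : (Fin N → ℝ) × (Fin N → ℝ) → (Fin N → ℝ) × (Fin N → ℝ))
    (hω1 : ∀ (y θ : Fin N → ℝ) (i : Fin N),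
      y i = (ω (y, θ)).1 i + ∑ j ∈ Finset.univ.erase i,
        ψθ ((ω (y, θ)).1 i - (ω (y, θ)).1 j) (θ i - θ j))
    (hω2 : ∀ (y θ : Fin N → ℝ) (i : Fin N),
      (ω (y, θ)).2 i = θ i + ∑ j ∈ Finset.univ.erase i,
        ψx ((ω (y, θ)).1 i - (ω (y, θ)).1 j) (θ i - θ j))
    (Y Θ : (Fin N → ℝ) × (Fin N → ℝ) → Fin N → ℝ)
    (hinvC1 : ContDiff ℝ 1 (fun q => (Y q, Θ q)))
    (hinv : ∀ q : (Fin N → ℝ) × (Fin N → ℝ), ω (Y q, Θ q) = q) :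
    ∀ (i j : Fin N) (q : (Fin N → ℝ) × (Fin N → ℝ)),
      (∑ k : Fin N,
        (fderiv ℝ (fun q' => Y q' i) q ((Pi.single k 1 : Fin N → ℝ), (0 : Fin N → ℝ))
            * fderiv ℝ (fun q' => Θ q' j) q ((0 : Fin N → ℝ), (Pi.single k 1 : Fin N → ℝ))
          - fderiv ℝ (fun q' => Y q' i) q ((0 : Fin N → ℝ), (Pi.single k 1 : Fin N → ℝ))
            * fderiv ℝ (fun q' => Θ q' j) q ((Pi.single k 1 : Fin N → ℝ), (0 : Fin N → ℝ)))
        = if i = j then 1 else 0) ∧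
      (∑ k : Fin N,
        (fderiv ℝ (fun q' => Y q' i) q ((Pi.single k 1 : Fin N → ℝ), (0 : Fin N → ℝ))
            * fderiv ℝ (fun q' => Y q' j) q ((0 : Fin N → ℝ), (Pi.single k 1 : Fin N → ℝ))
          - fderiv ℝ (fun q' => Y q' i) q ((0 : Fin N → ℝ), (Pi.single k 1 : Fin N → ℝ))
            * fderiv ℝ (fun q' => Y q' j) q ((Pi.single k 1 : Fin N → ℝ), (0 : Fin N → ℝ)))
        = 0) ∧
      (∑ k : Fin N,
        (fderiv ℝ (fun q' => Θ q' i) q ((Pi.single k 1 : Fin N → ℝ), (0 : Fin N → ℝ))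
            * fderiv ℝ (fun q' => Θ q' j) q ((0 : Fin N → ℝ), (Pi.single k 1 : Fin N → ℝ))
          - fderiv ℝ (fun q' => Θ q' i) q ((0 : Fin N → ℝ), (Pi.single k 1 : Fin N → ℝ))
            * fderiv ℝ (fun q' => Θ q' j) q ((Pi.single k 1 : Fin N → ℝ), (0 : Fin N → ℝ)))
        = 0) := by
  set Ψ : ℝ × ℝ → ℝ := fun z => ψ z.1 z.2
  have hΨ : Differentiable ℝ Ψ := hC2.differentiable (by norm_num)
  have hψx' : ∀ x t, ψx x t = fderiv ℝ Ψ (x, t) (1, 0) := fun x t =>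
    (hψx x t).unique (hΨ (x, t)).hasDerivAt_partial_fst
  have hψθ' : ∀ x t, ψθ x t = fderiv ℝ Ψ (x, t) (0, 1) := fun x t =>
    (hψθ x t).unique (hΨ (x, t)).hasDerivAt_partial_snd
  have hY : ∀ q, Y q = q.1 + pairForce Ψ (0, 1) q.1 (Θ q) := fun q => funext fun i => by
    simpa [hinv, pairForce, hψθ'] using hω1 (Y q) (Θ q) i
  have hp : ∀ q, q.2 = Θ q + pairForce Ψ (1, 0) q.1 (Θ q) := fun q => funext fun i => by
    simpa [hinv, pairForce, hψx'] using hω2 (Y q) (Θ q) i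
  have hΘ : Differentiable ℝ Θ := (contDiff_snd.comp hinvC1).differentiable one_ne_zero
  intro i j q
  obtain ⟨hYΘ, hYY, hΘΘ⟩ :=
    poissonMatrix_canonical hC2 (fun z => hsym z.1 z.2) (hΘ q) hY hp
  simp only [← poissonMatrix_apply, hYΘ, hYY, hΘΘ, one_apply, Matrix.zero_apply, and_self]

/-- The scattering coordinates `(Y, Θ) = ω⁻¹` are canonical:
`{Yᵢ, Θⱼ} = δᵢⱼ`, `{Yᵢ, Yⱼ} = 0`, `{Θᵢ, Θⱼ} = 0` for the canonical Poisson
bracket on `ℝ^{2N}`. -/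
theorem stmt11 (N : ℕ) (ε : ℝ) (hε : 0 < ε)
    (ψ ψx ψθ ψxθ : ℝ → ℝ → ℝ)
    (hC2 : ContDiff ℝ 2 (fun q : ℝ × ℝ => ψ q.1 q.2))
    (hψx : ∀ x t, HasDerivAt (fun x' => ψ x' t) (ψx x t) x)
    (hψθ : ∀ x t, HasDerivAt (fun t' => ψ x t') (ψθ x t) t)
    (hψxθ : ∀ x t, HasDerivAt (fun t' => ψx x t') (ψxθ x t) t)
    (hpos : ∀ x t, 0 ≤ ψxθ x t)
    (hsym : ∀ x t, ψ (-x) (-t) = ψ x t)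
    (hrange : ∀ x t, ε ≤ |x| → ψx x t = 0)
    (ω : (Fin N → ℝ) × (Fin N → ℝ) → (Fin N → ℝ) × (Fin N → ℝ))
    (hω1 : ∀ (y θ : Fin N → ℝ) (i : Fin N),
      y i = (ω (y, θ)).1 i + ∑ j ∈ Finset.univ.erase i,
        ψθ ((ω (y, θ)).1 i - (ω (y, θ)).1 j) (θ i - θ j))
    (hω2 : ∀ (y θ : Fin N → ℝ) (i : Fin N),
      (ω (y, θ)).2 i = θ i + ∑ j ∈ Finset.univ.erase i,
        ψx ((ω (y, θ)).1 i - (ω (y, θ)).1 j) (θ i - θ j))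
    (hωC1 : ContDiff ℝ 1 ω)
    (Y Θ : (Fin N → ℝ) × (Fin N → ℝ) → Fin N → ℝ)
    (hinvC1 : ContDiff ℝ 1 (fun q => (Y q, Θ q)))
    (hinv : ∀ q : (Fin N → ℝ) × (Fin N → ℝ), ω (Y q, Θ q) = q)
    (hinv' : ∀ y θ : Fin N → ℝ, Y (ω (y, θ)) = y ∧ Θ (ω (y, θ)) = θ) :
    ∀ (i j : Fin N) (q : (Fin N → ℝ) × (Fin N → ℝ)),
      (∑ k : Fin N,
        (fderiv ℝ (fun q' => Y q' i) q ((Pi.single k 1 : Fin N → ℝ), (0 : Fin N → ℝ))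
            * fderiv ℝ (fun q' => Θ q' j) q ((0 : Fin N → ℝ), (Pi.single k 1 : Fin N → ℝ))
          - fderiv ℝ (fun q' => Y q' i) q ((0 : Fin N → ℝ), (Pi.single k 1 : Fin N → ℝ))
            * fderiv ℝ (fun q' => Θ q' j) q ((Pi.single k 1 : Fin N → ℝ), (0 : Fin N → ℝ)))
        = if i = j then 1 else 0) ∧
      (∑ k : Fin N,
        (fderiv ℝ (fun q' => Y q' i) q ((Pi.single k 1 : Fin N → ℝ), (0 : Fin N → ℝ))
            * fderiv ℝ (fun q' => Y q' j) q ((0 : Fin N → ℝ), (Pi.single k 1 : Fin N → ℝ))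
          - fderiv ℝ (fun q' => Y q' i) q ((0 : Fin N → ℝ), (Pi.single k 1 : Fin N → ℝ))
            * fderiv ℝ (fun q' => Y q' j) q ((Pi.single k 1 : Fin N → ℝ), (0 : Fin N → ℝ)))
        = 0) ∧
      (∑ k : Fin N,
        (fderiv ℝ (fun q' => Θ q' i) q ((Pi.single k 1 : Fin N → ℝ), (0 : Fin N → ℝ))
            * fderiv ℝ (fun q' => Θ q' j) q ((0 : Fin N → ℝ), (Pi.single k 1 : Fin N → ℝ))
          - fderiv ℝ (fun q' => Θ q' i) q ((0 : Fin N → ℝ), (Pi.single k 1 : Fin N → ℝ))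
            * fderiv ℝ (fun q' => Θ q' j) q ((Pi.single k 1 : Fin N → ℝ), (0 : Fin N → ℝ)))
        = 0) :=
  stmt11_general N ψ ψx ψθ hC2 hψx hψθ hsym ω hω1 hω2 Y Θ hinvC1 hinv
end

section
/- Let Θ : ℝ^{2N} → ℝ^N be the C¹ map assigning to (x,p) the unique solution θ of p_i = θ_i + Σ_{j≠i} ψ_x(x_i−x_j, θ_i−θ_j), and define the Hamiltonian H(x,p) = (1/2) Σ_{i=1}^N Θ_i(x,p)². Fix (y,θ) ∈ ℝ^{2N} and let (x(t), p(t)) = ω(y + tθ, θ) be the trajectory of the semiclassical Bethe system, where ω solves y_i + tθ_i = x_i(t) + Σ_{j≠i} ψ_θ(x_i(t)−x_j(t), θ_i−θ_j) and p_i(t) = θ_i + Σ_{j≠i} ψ_x(x_i(t)−x_j(t), θ_i−θ_j). Then H is continuously differentiable and the trajectory satisfies Hamilton's equations: dx_i/dt = ∂H/∂p_i(x(t),p(t)) and dp_i/dt = −∂H/∂x_i(x(t),p(t)) for all t ∈ ℝ and i = 1,…,N. -/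
open Finset Function

/-!
Write `L_k` for the graph Laplacian with symmetric weights `k`, and take the weights
`a_ij = ψ_xθ`, `c_ij = ψ_xx` evaluated at `(x_i - x_j, θ_i - θ_j)`; since `ψ` is even, `ψ_x` is
odd and both weights are symmetric, and `a ≥ 0` makes `A = 1 + L_a` positive definite.

Because `ψ_x` is odd and monotone in `θ`, the equations defining `Θ` have a unique solution, so
`Θ(x(t), p(t)) = θ` along the trajectory. By Schwarz's theorem `∂_x ψ_θ = ψ_xθ`, so the position
equations have derivative `A` in `x`; the inverse function theorem gives `ẋ = A⁻¹θ`, and then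
`ṗ = L_c ẋ`. Differentiating the equations defining `Θ` gives `A dΘ(v) = v_p - L_c v_x`, hence, by
symmetry of `A` and `L_c`, `dH(v) = ⟨θ, dΘ(v)⟩ = ⟨A⁻¹θ, v_p⟩ - ⟨L_c A⁻¹θ, v_x⟩`: these are
Hamilton's equations.
-/

section TwoVariables

variable {φ φ₁ φ₂ φ₁₂ : ℝ → ℝ → ℝ} {a b : ℝ}

lemma HasFDerivAt.hasDerivAt_partial_fst {L : ℝ × ℝ →L[ℝ] ℝ}
    (h : HasFDerivAt (uncurry φ) L (a, b)) : HasDerivAt (φ · b) (L (1, 0)) a :=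
  (h.comp_hasDerivAt a ((hasDerivAt_id a).prodMk (hasDerivAt_const a b)) :)

lemma HasFDerivAt.hasDerivAt_partial_snd {L : ℝ × ℝ →L[ℝ] ℝ}
    (h : HasFDerivAt (uncurry φ) L (a, b)) : HasDerivAt (φ a ·) (L (0, 1)) b :=
  (h.comp_hasDerivAt b ((hasDerivAt_const b a).prodMk (hasDerivAt_id b)) :)

lemma hasFDerivAt_uncurry_of_partials (hd : DifferentiableAt ℝ (uncurry φ) (a, b))
    (h₁ : HasDerivAt (φ · b) (φ₁ a b) a) (h₂ : HasDerivAt (φ a ·) (φ₂ a b) b) :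
    HasFDerivAt (uncurry φ)
      (φ₁ a b • ContinuousLinearMap.fst ℝ ℝ ℝ + φ₂ a b • ContinuousLinearMap.snd ℝ ℝ ℝ) (a, b) := by
  convert hd.hasFDerivAt using 1
  rw [h₁.unique hd.hasFDerivAt.hasDerivAt_partial_fst,
    h₂.unique hd.hasFDerivAt.hasDerivAt_partial_snd]
  ext
  · simp
  · simp

lemma partial_fst_eq_fderiv (hd : Differentiable ℝ (uncurry φ))
    (h₁ : ∀ a b, HasDerivAt (φ · b) (φ₁ a b) a) :
    φ₁ = fun a b => fderiv ℝ (uncurry φ) (a, b) (1, 0) :=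
  funext₂ fun a b => (h₁ a b).unique (hd (a, b)).hasFDerivAt.hasDerivAt_partial_fst

lemma partial_snd_eq_fderiv (hd : Differentiable ℝ (uncurry φ))
    (h₂ : ∀ a b, HasDerivAt (φ a ·) (φ₂ a b) b) :
    φ₂ = fun a b => fderiv ℝ (uncurry φ) (a, b) (0, 1) :=
  funext₂ fun a b => (h₂ a b).unique (hd (a, b)).hasFDerivAt.hasDerivAt_partial_snd

lemma ContDiff.uncurry_partial_fst {m n : WithTop ℕ∞} (hφ : ContDiff ℝ n (uncurry φ))
    (hmn : m + 1 ≤ n) (h₁ : ∀ a b, HasDerivAt (φ · b) (φ₁ a b) a) :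
    ContDiff ℝ m (uncurry φ₁) := by
  rw [partial_fst_eq_fderiv ((hφ.of_le (le_add_self.trans hmn)).differentiable one_ne_zero) h₁]
  exact (hφ.fderiv_right hmn).clm_apply contDiff_const

lemma ContDiff.uncurry_partial_snd {m n : WithTop ℕ∞} (hφ : ContDiff ℝ n (uncurry φ))
    (hmn : m + 1 ≤ n) (h₂ : ∀ a b, HasDerivAt (φ a ·) (φ₂ a b) b) :
    ContDiff ℝ m (uncurry φ₂) := by
  rw [partial_snd_eq_fderiv ((hφ.of_le (le_add_self.trans hmn)).differentiable one_ne_zero) h₂]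
  exact (hφ.fderiv_right hmn).clm_apply contDiff_const

lemma ContDiff.hasDerivAt_partial_comm (hφ : ContDiff ℝ 2 (uncurry φ))
    (h₁ : ∀ a b, HasDerivAt (φ · b) (φ₁ a b) a) (h₂ : ∀ a b, HasDerivAt (φ a ·) (φ₂ a b) b)
    (h₁₂ : HasDerivAt (φ₁ a ·) (φ₁₂ a b) b) : HasDerivAt (φ₂ · b) (φ₁₂ a b) a := by
  have hd : Differentiable ℝ (uncurry φ) := hφ.differentiable (by norm_num)
  set D := fderiv ℝ (fderiv ℝ (uncurry φ)) (a, b)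
  have hD : HasFDerivAt (fderiv ℝ (uncurry φ)) D (a, b) :=
    ((hφ.fderiv_right (m := 1) le_rfl).differentiable one_ne_zero _).hasFDerivAt
  have hdir : ∀ v, HasFDerivAt (uncurry fun a b => fderiv ℝ (uncurry φ) (a, b) v)
      ((ContinuousLinearMap.apply ℝ ℝ v).comp D) (a, b) := fun v =>
    (ContinuousLinearMap.apply ℝ ℝ v).hasFDerivAt.comp (a, b) hD
  have h₁₂' : HasDerivAt (φ₁ a ·) (D (0, 1) (1, 0)) b := by
    rw [partial_fst_eq_fderiv hd h₁]
    exact (hdir (1, 0)).hasDerivAt_partial_snd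
  have h₂₁ : HasDerivAt (φ₂ · b) (D (1, 0) (0, 1)) a := by
    rw [partial_snd_eq_fderiv hd h₂]
    exact (hdir (0, 1)).hasDerivAt_partial_fst
  rwa [(hφ.contDiffAt.isSymmSndFDerivAt (by simp)) (1, 0) (0, 1), ← h₁₂.unique h₁₂'] at h₂₁

lemma partial_fst_neg_neg {σ : ℝ} (h₁ : ∀ a b, HasDerivAt (φ · b) (φ₁ a b) a)
    (hσ : ∀ a b, φ (-a) (-b) = σ * φ a b) (a b : ℝ) : φ₁ (-a) (-b) = -σ * φ₁ a b := by
  have hcomp : HasDerivAt (fun s => φ (-s) (-b)) (φ₁ (-a) (-b) * -1) a :=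
    (h₁ (-a) (-b)).comp a (hasDerivAt_neg a)
  simp only [hσ] at hcomp
  linarith [hcomp.unique ((h₁ a b).const_mul σ)]

lemma partial_snd_neg_neg {σ : ℝ} (h₂ : ∀ a b, HasDerivAt (φ a ·) (φ₂ a b) b)
    (hσ : ∀ a b, φ (-a) (-b) = σ * φ a b) (a b : ℝ) : φ₂ (-a) (-b) = -σ * φ₂ a b :=
  partial_fst_neg_neg (φ := flip φ) (φ₁ := flip φ₂) (fun b a => h₂ a b) (fun b a => hσ a b) b a

end TwoVariables

lemma HasStrictFDerivAt.hasDerivAt_of_comp_eq {E G : Type*} [NormedAddCommGroup E]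
    [NormedSpace ℝ E] [CompleteSpace E] [NormedAddCommGroup G] [NormedSpace ℝ G]
    {F : E → G} {A : E ≃L[ℝ] G} {γ : ℝ → E} {c : ℝ → G} {c' : G} {t : ℝ}
    (hF : HasStrictFDerivAt F (A : E →L[ℝ] G) (γ t)) (hinj : Injective F)
    (hc : HasDerivAt c c' t) (hγ : ∀ s, F (γ s) = c s) : HasDerivAt γ (A.symm c') t := by
  have hg := hF.to_localInverse.hasFDerivAt
  rw [hγ] at hg
  have hc_tendsto : Filter.Tendsto c (nhds t) (nhds (F (γ t))) := hγ t ▸ hc.continuousAt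
  refine (hg.comp_hasDerivAt t hc).congr_of_eventuallyEq ?_
  filter_upwards [hc_tendsto.eventually hF.eventually_right_inverse] with s hs
  exact hinj ((hγ s).trans hs.symm)

lemma fderiv_half_sum_sq {ι E : Type*} [Fintype ι] [NormedAddCommGroup E] [NormedSpace ℝ E]
    {Θ : E → ι → ℝ} {q : E} (hΘ : DifferentiableAt ℝ Θ q) (v : E) :
    fderiv ℝ (fun q => 1 / 2 * ∑ i, Θ q i ^ 2) q v = Θ q ⬝ᵥ fderiv ℝ Θ q v := by
  have hi : ∀ i,
      HasFDerivAt (fun q => Θ q i) ((ContinuousLinearMap.proj i).comp (fderiv ℝ Θ q)) q :=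
    fun i => ((hasFDerivAt_apply i (Θ q)).comp q hΘ.hasFDerivAt :)
  rw [((HasFDerivAt.fun_sum fun i _ => (hi i).pow 2).const_mul (1 / 2)).fderiv]
  simp [dotProduct, mul_sum, mul_assoc]

section Pairwise

variable {ι : Type*}

def pairCoeff (φ : ℝ → ℝ → ℝ) (w z : ι → ℝ) (i j : ι) : ℝ :=
  φ (w i - w j) (z i - z j)

lemma pairCoeff_comm {φ : ℝ → ℝ → ℝ} (hφ : ∀ a b, φ (-a) (-b) = φ a b) (w z : ι → ℝ) (i j : ι) :
    pairCoeff φ w z j i = pairCoeff φ w z i j := by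
  simp only [pairCoeff, ← neg_sub (w i), ← neg_sub (z i), hφ]

variable [Fintype ι] [DecidableEq ι]

/-- Both Bethe equations have this shape: `p = pairShift ψx x θ` and
`y + t • θ = pairShift (flip ψθ) θ x`. -/
def pairShift (φ : ℝ → ℝ → ℝ) (w z : ι → ℝ) : ι → ℝ :=
  fun i => z i + ∑ j ∈ univ.erase i, φ (w i - w j) (z i - z j)

def graphLaplacian (k : ι → ι → ℝ) : (ι → ℝ) →L[ℝ] ι → ℝ :=
  ContinuousLinearMap.pi fun i =>
    ∑ j ∈ univ.erase i, k i j • (ContinuousLinearMap.proj (R := ℝ) (φ := fun _ : ι => ℝ) i -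
      ContinuousLinearMap.proj j)

@[simp]
lemma graphLaplacian_apply (k : ι → ι → ℝ) (v : ι → ℝ) (i : ι) :
    graphLaplacian k v i = ∑ j ∈ univ.erase i, k i j * (v i - v j) := by
  simp [graphLaplacian]

lemma two_mul_sum_sum_erase_of_antisymm (d : ι → ℝ) (Δ : ι → ι → ℝ)
    (hΔ : ∀ i j, Δ j i = -Δ i j) :
    2 * ∑ i, ∑ j ∈ univ.erase i, d i * Δ i j = ∑ i, ∑ j ∈ univ.erase i, (d i - d j) * Δ i j := by
  have hdiag : ∀ i, Δ i i = 0 := fun i => by linarith [hΔ i i]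
  have herase : ∀ F : ι → ι → ℝ, (∀ i, F i i = 0) →
      ∑ i, ∑ j ∈ univ.erase i, F i j = ∑ i, ∑ j, F i j :=
    fun F hF => sum_congr rfl fun i _ => sum_erase univ (hF i)
  rw [herase _ fun i => by simp [hdiag], herase _ fun i => by simp]
  have hswap : ∑ i, ∑ j, d j * Δ i j = -∑ i, ∑ j, d i * Δ i j := by
    rw [sum_comm, ← sum_neg_distrib]
    exact sum_congr rfl fun i _ => by
      rw [← sum_neg_distrib]
      exact sum_congr rfl fun j _ => by rw [hΔ i j, mul_neg]
  simp only [sub_mul, sum_sub_distrib, hswap]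
  ring

lemma two_mul_dotProduct_graphLaplacian (k : ι → ι → ℝ) (hk : ∀ i j, k j i = k i j) (v w : ι → ℝ) :
    2 * (v ⬝ᵥ graphLaplacian k w) =
      ∑ i, ∑ j ∈ univ.erase i, k i j * ((v i - v j) * (w i - w j)) := by
  have := two_mul_sum_sum_erase_of_antisymm v (fun i j => k i j * (w i - w j))
    fun i j => by rw [hk]; ring
  simp only [dotProduct, graphLaplacian_apply, mul_sum, this]
  simp only [← mul_assoc, mul_comm (k _ _)]

lemma dotProduct_graphLaplacian_comm {k : ι → ι → ℝ} (hk : ∀ i j, k j i = k i j) (v w : ι → ℝ) :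
    v ⬝ᵥ graphLaplacian k w = graphLaplacian k v ⬝ᵥ w := by
  have h₁ := two_mul_dotProduct_graphLaplacian k hk v w
  have h₂ := two_mul_dotProduct_graphLaplacian k hk w v
  simp only [mul_comm (v _ - v _)] at h₁
  rw [dotProduct_comm (graphLaplacian k v)]
  linarith

lemma dotProduct_graphLaplacian_self_nonneg {k : ι → ι → ℝ} (hk : ∀ i j, k j i = k i j)
    (hk₀ : ∀ i j, 0 ≤ k i j) (v : ι → ℝ) : 0 ≤ v ⬝ᵥ graphLaplacian k v := by
  have := two_mul_dotProduct_graphLaplacian k hk v v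
  have : 0 ≤ ∑ i, ∑ j ∈ univ.erase i, k i j * ((v i - v j) * (v i - v j)) :=
    sum_nonneg fun i _ => sum_nonneg fun j _ => mul_nonneg (hk₀ i j) (mul_self_nonneg _)
  linarith

lemma injective_id_add_graphLaplacian {k : ι → ι → ℝ} (hk : ∀ i j, k j i = k i j)
    (hk₀ : ∀ i j, 0 ≤ k i j) : Injective (ContinuousLinearMap.id ℝ (ι → ℝ) + graphLaplacian k) := by
  rw [injective_iff_map_eq_zero]
  intro v hv
  have hsum : v ⬝ᵥ v + v ⬝ᵥ graphLaplacian k v = 0 := by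
    simpa [dotProduct_add] using congrArg (v ⬝ᵥ ·) hv
  have := dotProduct_graphLaplacian_self_nonneg hk hk₀ v
  exact dotProduct_self_eq_zero.1 (le_antisymm (by linarith) (dotProduct_self_star_nonneg v))

lemma pairShift_injective {φ : ℝ → ℝ → ℝ} (hmono : ∀ a, Monotone (φ a))
    (hodd : ∀ a b, φ (-a) (-b) = -φ a b) (w : ι → ℝ) : Injective (pairShift φ w) := by
  intro v v' h
  set Δ := fun i j => φ (w i - w j) (v i - v j) - φ (w i - w j) (v' i - v' j)
  have hΔ : ∀ i j, Δ j i = -Δ i j := fun i j => by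
    simp only [Δ, ← neg_sub (w i), ← neg_sub (v i), ← neg_sub (v' i), hodd]
    ring
  have hd : ∀ i, (v - v') i = -∑ j ∈ univ.erase i, Δ i j := fun i => by
    have := congrFun h i
    simp only [pairShift] at this
    simp only [Pi.sub_apply, Δ, sum_sub_distrib]
    linarith
  have hsign : ∀ i j, 0 ≤ ((v - v') i - (v - v') j) * Δ i j := fun i j => by
    rcases le_total (v' i - v' j) (v i - v j) with hle | hle
    · exact mul_nonneg (by simp only [Pi.sub_apply]; linarith) (sub_nonneg.2 (hmono _ hle))
    · exact mul_nonneg_of_nonpos_of_nonpos (by simp only [Pi.sub_apply]; linarith)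
        (sub_nonpos.2 (hmono _ hle))
  have hnorm : (v - v') ⬝ᵥ (v - v') = -∑ i, ∑ j ∈ univ.erase i, (v - v') i * Δ i j := by
    simp only [dotProduct, ← mul_sum, ← sum_neg_distrib]
    exact sum_congr rfl fun i _ => by rw [hd i]; ring
  -- `|v - v'|² = -½ ∑ (dᵢ - dⱼ) Δᵢⱼ` with `d = v - v'`, and `Δᵢⱼ` has the sign of `dᵢ - dⱼ`.
  have := two_mul_sum_sum_erase_of_antisymm (v - v') Δ hΔ
  have : 0 ≤ ∑ i, ∑ j ∈ univ.erase i, ((v - v') i - (v - v') j) * Δ i j :=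
    sum_nonneg fun i _ => sum_nonneg fun j _ => hsign i j
  exact sub_eq_zero.1 <| dotProduct_self_eq_zero.1 <|
    le_antisymm (by linarith) (dotProduct_self_star_nonneg _)

end Pairwise

section PairShiftCalculus

variable {ι : Type*} [Fintype ι] [DecidableEq ι] {φ φ₁ φ₂ : ℝ → ℝ → ℝ}

lemma hasDerivAt_pairShift (hφ : Differentiable ℝ (uncurry φ))
    (h₁ : ∀ a b, HasDerivAt (φ · b) (φ₁ a b) a) (h₂ : ∀ a b, HasDerivAt (φ a ·) (φ₂ a b) b)
    {W Z : ℝ → ι → ℝ} {W' Z' : ι → ℝ} {t : ℝ} (hW : HasDerivAt W W' t) (hZ : HasDerivAt Z Z' t) :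
    HasDerivAt (fun s => pairShift φ (W s) (Z s))
      (Z' + graphLaplacian (pairCoeff φ₂ (W t) (Z t)) Z' +
        graphLaplacian (pairCoeff φ₁ (W t) (Z t)) W') t := by
  rw [hasDerivAt_pi] at hW hZ ⊢
  intro i
  have hterm : ∀ j, HasDerivAt (fun s => φ (W s i - W s j) (Z s i - Z s j))
      (pairCoeff φ₁ (W t) (Z t) i j * (W' i - W' j) +
        pairCoeff φ₂ (W t) (Z t) i j * (Z' i - Z' j)) t := fun j =>
    ((hasFDerivAt_uncurry_of_partials (a := W t i - W t j) (b := Z t i - Z t j)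
      (hφ _) (h₁ _ _) (h₂ _ _)).comp_hasDerivAt
      t (((hW i).sub (hW j)).prodMk ((hZ i).sub (hZ j))) :).congr_deriv (by simp [pairCoeff])
  refine ((hZ i).add (HasDerivAt.fun_sum (u := univ.erase i) fun j _ => hterm j) :).congr_deriv ?_
  simp only [Pi.add_apply, graphLaplacian_apply, sum_add_distrib]
  ring

lemma hasStrictFDerivAt_pairShift (hφ : ContDiff ℝ 1 (uncurry φ))
    (h₂ : ∀ a b, HasDerivAt (φ a ·) (φ₂ a b) b) (w z : ι → ℝ) :
    HasStrictFDerivAt (pairShift φ w)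
      (ContinuousLinearMap.id ℝ (ι → ℝ) + graphLaplacian (pairCoeff φ₂ w z)) z := by
  have hd : Differentiable ℝ (uncurry φ) := hφ.differentiable one_ne_zero
  have hC : ContDiff ℝ 1 (pairShift φ w) :=
    contDiff_pi.2 fun i => (contDiff_apply ℝ ℝ i).add <| ContDiff.sum fun j _ =>
      hφ.comp (contDiff_const.prodMk ((contDiff_apply ℝ ℝ i).sub (contDiff_apply ℝ ℝ j)))
  have hdz := hC.differentiable one_ne_zero z
  refine hC.contDiffAt.hasStrictFDerivAt' ?_ one_ne_zero
  convert hdz.hasFDerivAt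
  ext1 v
  rw [← hdz.lineDeriv_eq_fderiv]
  refine (HasLineDerivAt.lineDeriv ?_).symm
  simpa [HasLineDerivAt] using hasDerivAt_pairShift hd
    (fun a b => (hd (a, b)).hasFDerivAt.hasDerivAt_partial_fst) h₂
    (hasDerivAt_const 0 w) (((hasDerivAt_id 0).smul_const v).const_add z)

lemma exists_hasDerivAt_of_pairShift_eq (hφ : ContDiff ℝ 1 (uncurry φ))
    (h₂ : ∀ a b, HasDerivAt (φ a ·) (φ₂ a b) b) (hφ₂ : ∀ a b, 0 ≤ φ₂ a b)
    (hodd : ∀ a b, φ (-a) (-b) = -φ a b) {w : ι → ℝ} {X c : ℝ → ι → ℝ} {c' : ι → ℝ} {t : ℝ}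
    (hX : ∀ s, pairShift φ w (X s) = c s) (hc : HasDerivAt c c' t) :
    ∃ u, u + graphLaplacian (pairCoeff φ₂ w (X t)) u = c' ∧ HasDerivAt X u t := by
  set k := pairCoeff φ₂ w (X t)
  have hk : ∀ i j, k j i = k i j := pairCoeff_comm (fun a b => by
    simpa using partial_snd_neg_neg h₂ (σ := -1) (fun a b => by rw [hodd]; ring) a b) w (X t)
  let A : (ι → ℝ) ≃L[ℝ] (ι → ℝ) := (LinearEquiv.ofInjectiveEndo _
    (injective_id_add_graphLaplacian hk fun i j => hφ₂ _ _)).toContinuousLinearEquiv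
  exact ⟨A.symm c', A.apply_symm_apply c',
    HasStrictFDerivAt.hasDerivAt_of_comp_eq (hasStrictFDerivAt_pairShift hφ h₂ w (X t))
      (pairShift_injective (fun a => monotone_of_hasDerivAt_nonneg (h₂ a) (hφ₂ a)) hodd w) hc hX⟩

lemma fderiv_add_graphLaplacian_of_eq_pairShift (hφ : Differentiable ℝ (uncurry φ))
    (h₁ : ∀ a b, HasDerivAt (φ · b) (φ₁ a b) a) (h₂ : ∀ a b, HasDerivAt (φ a ·) (φ₂ a b) b)
    {Θ : (ι → ℝ) × (ι → ℝ) → ι → ℝ} (hΘ : ∀ q, q.2 = pairShift φ q.1 (Θ q))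
    {q : (ι → ℝ) × (ι → ℝ)} (hΘq : DifferentiableAt ℝ Θ q) (v : (ι → ℝ) × (ι → ℝ)) :
    fderiv ℝ Θ q v + graphLaplacian (pairCoeff φ₂ q.1 (Θ q)) (fderiv ℝ Θ q v) =
      v.2 - graphLaplacian (pairCoeff φ₁ q.1 (Θ q)) v.1 := by
  have hline : ∀ w : ι → ℝ, ∀ x, HasDerivAt (fun s : ℝ => x + s • w) w 0 := fun w x => by
    simpa using ((hasDerivAt_id (0 : ℝ)).smul_const w).const_add x
  have hrhs := hasDerivAt_pairShift hφ h₁ h₂ (hline v.1 q.1)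
    (hΘq.hasFDerivAt.comp_hasDerivAt_of_eq (0 : ℝ)
      (((hasDerivAt_id (0 : ℝ)).smul_const v).const_add q) (by simp))
  have hlhs := hline v.2 q.2
  rw [show (fun s : ℝ => q.2 + s • v.2) = fun s => pairShift φ (q.1 + s • v.1) (Θ (q + s • v))
    from funext fun s => hΘ (q + s • v)] at hlhs
  rw [hlhs.unique hrhs]
  simp

lemma fderiv_half_sum_sq_of_eq_pairShift (hφ : Differentiable ℝ (uncurry φ))
    (h₁ : ∀ a b, HasDerivAt (φ · b) (φ₁ a b) a) (h₂ : ∀ a b, HasDerivAt (φ a ·) (φ₂ a b) b)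
    (hodd : ∀ a b, φ (-a) (-b) = -φ a b)
    {Θ : (ι → ℝ) × (ι → ℝ) → ι → ℝ} (hΘ : ∀ q, q.2 = pairShift φ q.1 (Θ q))
    {q : (ι → ℝ) × (ι → ℝ)} (hΘq : DifferentiableAt ℝ Θ q)
    {u : ι → ℝ} (hu : u + graphLaplacian (pairCoeff φ₂ q.1 (Θ q)) u = Θ q) (v : (ι → ℝ) × (ι → ℝ)) :
    fderiv ℝ (fun q => 1 / 2 * ∑ i, Θ q i ^ 2) q v =
      u ⬝ᵥ v.2 - graphLaplacian (pairCoeff φ₁ q.1 (Θ q)) u ⬝ᵥ v.1 := by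
  have hσ : ∀ a b, φ (-a) (-b) = -1 * φ a b := fun a b => by rw [hodd, neg_one_mul]
  have ha := pairCoeff_comm (fun a b => by simpa using partial_snd_neg_neg h₂ hσ a b) q.1 (Θ q)
  have hc := pairCoeff_comm (fun a b => by simpa using partial_fst_neg_neg h₁ hσ a b) q.1 (Θ q)
  calc fderiv ℝ (fun q => 1 / 2 * ∑ i, Θ q i ^ 2) q v
      = (u + graphLaplacian (pairCoeff φ₂ q.1 (Θ q)) u) ⬝ᵥ fderiv ℝ Θ q v := by
        rw [fderiv_half_sum_sq hΘq, hu]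
    _ = u ⬝ᵥ (fderiv ℝ Θ q v + graphLaplacian (pairCoeff φ₂ q.1 (Θ q)) (fderiv ℝ Θ q v)) := by
        rw [add_dotProduct, dotProduct_add, dotProduct_graphLaplacian_comm ha]
    _ = u ⬝ᵥ v.2 - graphLaplacian (pairCoeff φ₁ q.1 (Θ q)) u ⬝ᵥ v.1 := by
        rw [fderiv_add_graphLaplacian_of_eq_pairShift hφ h₁ h₂ hΘ hΘq, dotProduct_sub,
          dotProduct_graphLaplacian_comm hc]

end PairShiftCalculus

theorem stmt12_general (N : ℕ)
    (ψ ψx ψθ ψxθ : ℝ → ℝ → ℝ)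
    (hC2 : ContDiff ℝ 2 (fun q : ℝ × ℝ => ψ q.1 q.2))
    (hψx : ∀ x t, HasDerivAt (fun x' => ψ x' t) (ψx x t) x)
    (hψθ : ∀ x t, HasDerivAt (fun t' => ψ x t') (ψθ x t) t)
    (hψxθ : ∀ x t, HasDerivAt (fun t' => ψx x t') (ψxθ x t) t)
    (hpos : ∀ x t, 0 ≤ ψxθ x t)
    (hsym : ∀ x t, ψ (-x) (-t) = ψ x t)
    (Θ : (Fin N → ℝ) × (Fin N → ℝ) → Fin N → ℝ)
    (hΘC1 : ContDiff ℝ 1 Θ)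
    (hΘ : ∀ (q : (Fin N → ℝ) × (Fin N → ℝ)) (i : Fin N),
      q.2 i = Θ q i + ∑ j ∈ Finset.univ.erase i,
        ψx (q.1 i - q.1 j) (Θ q i - Θ q j))
    (H : (Fin N → ℝ) × (Fin N → ℝ) → ℝ)
    (hH : ∀ q, H q = (1 / 2) * ∑ i, Θ q i ^ 2)
    (y θ : Fin N → ℝ)
    (xt pt : ℝ → Fin N → ℝ)
    (hxt : ∀ t i, y i + t * θ i
      = xt t i + ∑ j ∈ Finset.univ.erase i, ψθ (xt t i - xt t j) (θ i - θ j))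
    (hpt : ∀ t i, pt t i
      = θ i + ∑ j ∈ Finset.univ.erase i, ψx (xt t i - xt t j) (θ i - θ j)) :
    ContDiff ℝ 1 H ∧
    ∀ (t : ℝ) (i : Fin N),
      HasDerivAt (fun s => xt s i)
        (fderiv ℝ H (xt t, pt t) ((0 : Fin N → ℝ), (Pi.single i 1 : Fin N → ℝ))) t ∧
      HasDerivAt (fun s => pt s i)
        (-(fderiv ℝ H (xt t, pt t) ((Pi.single i 1 : Fin N → ℝ), (0 : Fin N → ℝ)))) t := by
  have hψ_even : ∀ a b, ψ (-a) (-b) = 1 * ψ a b := fun a b => by rw [hsym, one_mul]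
  have hψx_odd : ∀ a b, ψx (-a) (-b) = -ψx a b := fun a b => by
    simpa using partial_fst_neg_neg hψx hψ_even a b
  have hψθ_odd : ∀ a b, ψθ (-a) (-b) = -ψθ a b := fun a b => by
    simpa using partial_snd_neg_neg hψθ hψ_even a b
  have hψθx : ∀ a b, HasDerivAt (ψθ · b) (ψxθ a b) a := fun a b =>
    hC2.hasDerivAt_partial_comm hψx hψθ (hψxθ a b)
  have hψxd : Differentiable ℝ (uncurry ψx) :=
    (hC2.uncurry_partial_fst (by norm_num) hψx).differentiable one_ne_zero
  have hψxx : ∀ a b, HasDerivAt (ψx · b) (fderiv ℝ (uncurry ψx) (a, b) (1, 0)) a := fun a b =>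
    (hψxd (a, b)).hasFDerivAt.hasDerivAt_partial_fst
  have hΘ' : ∀ q, q.2 = pairShift ψx q.1 (Θ q) := fun q => funext (hΘ q)
  have hpt' : ∀ s, pt s = pairShift ψx (xt s) θ := fun s => funext (hpt s)
  have hxt' : ∀ s, pairShift (flip ψθ) θ (xt s) = y + s • θ := fun s =>
    funext fun i => (hxt s i).symm
  have hΘxt : ∀ s, Θ (xt s, pt s) = θ := fun s =>
    pairShift_injective (fun a => monotone_of_hasDerivAt_nonneg (hψxθ a) (hpos a)) hψx_odd (xt s)
      ((hΘ' _).symm.trans (hpt' s))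
  have hH' : H = fun q => 1 / 2 * ∑ i, Θ q i ^ 2 := funext hH
  refine ⟨hH' ▸ contDiff_const.mul
    (ContDiff.sum fun i _ => ((contDiff_apply ℝ ℝ i).comp hΘC1).pow 2), fun t i => ?_⟩
  obtain ⟨u, hu, hx⟩ := exists_hasDerivAt_of_pairShift_eq (φ := flip ψθ)
    ((hC2.uncurry_partial_snd (by norm_num) hψθ).comp (contDiff_snd.prodMk contDiff_fst))
    (fun a b => hψθx b a) (fun a b => hpos b a) (fun a b => hψθ_odd b a) hxt'
    (by simpa using ((hasDerivAt_id t).smul_const θ).const_add y)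
  have hp := hasDerivAt_pairShift hψxd hψxx hψxθ hx (hasDerivAt_const t θ)
  have hdH := fderiv_half_sum_sq_of_eq_pairShift hψxd hψxx hψxθ hψx_odd hΘ'
    (hΘC1.differentiable one_ne_zero (xt t, pt t)) (u := u) (by rw [hΘxt]; exact hu)
  rw [hH']
  simp only [hdH, hΘxt]
  constructor
  · simpa [dotProduct_single] using hasDerivAt_pi.1 hx i
  · simp only [hpt']
    simpa [dotProduct_single] using hasDerivAt_pi.1 hp i

/-- The Hamiltonian `H(x,p) = (1/2)∑ᵢ Θᵢ(x,p)²` is `C¹` and the trajectories of the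
semiclassical Bethe system satisfy Hamilton's equations
`dxᵢ/dt = ∂H/∂pᵢ`, `dpᵢ/dt = −∂H/∂xᵢ`. -/
theorem stmt12 (N : ℕ) (ε : ℝ) (hε : 0 < ε)
    (ψ ψx ψθ ψxθ : ℝ → ℝ → ℝ)
    (hC2 : ContDiff ℝ 2 (fun q : ℝ × ℝ => ψ q.1 q.2))
    (hψx : ∀ x t, HasDerivAt (fun x' => ψ x' t) (ψx x t) x)
    (hψθ : ∀ x t, HasDerivAt (fun t' => ψ x t') (ψθ x t) t)
    (hψxθ : ∀ x t, HasDerivAt (fun t' => ψx x t') (ψxθ x t) t)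
    (hpos : ∀ x t, 0 ≤ ψxθ x t)
    (hsym : ∀ x t, ψ (-x) (-t) = ψ x t)
    (hrange : ∀ x t, ε ≤ |x| → ψx x t = 0)
    (Θ : (Fin N → ℝ) × (Fin N → ℝ) → Fin N → ℝ)
    (hΘC1 : ContDiff ℝ 1 Θ)
    (hΘ : ∀ (q : (Fin N → ℝ) × (Fin N → ℝ)) (i : Fin N),
      q.2 i = Θ q i + ∑ j ∈ Finset.univ.erase i,
        ψx (q.1 i - q.1 j) (Θ q i - Θ q j))
    (H : (Fin N → ℝ) × (Fin N → ℝ) → ℝ)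
    (hH : ∀ q, H q = (1 / 2) * ∑ i, Θ q i ^ 2)
    (y θ : Fin N → ℝ)
    (xt pt : ℝ → Fin N → ℝ)
    (hxt : ∀ t i, y i + t * θ i
      = xt t i + ∑ j ∈ Finset.univ.erase i, ψθ (xt t i - xt t j) (θ i - θ j))
    (hpt : ∀ t i, pt t i
      = θ i + ∑ j ∈ Finset.univ.erase i, ψx (xt t i - xt t j) (θ i - θ j)) :
    ContDiff ℝ 1 H ∧
    ∀ (t : ℝ) (i : Fin N),
      HasDerivAt (fun s => xt s i)
        (fderiv ℝ H (xt t, pt t) ((0 : Fin N → ℝ), (Pi.single i 1 : Fin N → ℝ))) t ∧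
      HasDerivAt (fun s => pt s i)
        (-(fderiv ℝ H (xt t, pt t) ((Pi.single i 1 : Fin N → ℝ), (0 : Fin N → ℝ)))) t :=
  stmt12_general N ψ ψx ψθ ψxθ hC2 hψx hψθ hψxθ hpos hsym Θ hΘC1 hΘ H hH y θ xt pt hxt hpt
end

section
/- Let {I_1,…,I_n} be a partition of {1,…,N} and (x,p) ∈ ℝ^{2N} such that |x_i − x_j| > ε whenever i and j lie in different blocks. Let θ ∈ ℝ^N solve p_i = θ_i + Σ_{j≠i} ψ_x(x_i−x_j, θ_i−θ_j) for all i. Then for every block I_r, the restriction (θ_i)_{i∈I_r} is the unique solution of the restricted system p_i = θ_i + Σ_{i'∈I_r, i'≠i} ψ_x(x_i−x_{i'}, θ_i−θ_{i'}), i ∈ I_r. Consequently, for every a ∈ ℕ the quasi-potential V_a(x,p) = Σ_{i=1}^N (θ_i^a − p_i^a) decomposes as V_a(x,p) = Σ_{r=1}^n V_a^{(I_r)}(x_{I_r}, p_{I_r}), where V_a^{(I)}(x_I, p_I) = Σ_{i∈I} ((θ^I_i)^a − p_i^a) and θ^I is the solution of the system restricted to I; in particular the interactions are of finite range ε. -/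
open Finset

/-- Cluster decomposition of the quasi-potentials: if the particles split into blocks
`I₁,…,I_n` pairwise separated by more than `ε`, then the asymptotic momenta restrict to
the unique solutions of the block systems, and the quasi-potential
`V_a = ∑ᵢ(θᵢᵃ − pᵢᵃ)` decomposes as a sum of block contributions (finite range `ε`). -/
theorem stmt13 (N n : ℕ) (ε : ℝ) (hε : 0 < ε)
    (ψ ψx ψθ ψxθ : ℝ → ℝ → ℝ)
    (hC2 : ContDiff ℝ 2 (fun q : ℝ × ℝ => ψ q.1 q.2))
    (hψx : ∀ x t, HasDerivAt (fun x' => ψ x' t) (ψx x t) x)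
    (hψθ : ∀ x t, HasDerivAt (fun t' => ψ x t') (ψθ x t) t)
    (hψxθ : ∀ x t, HasDerivAt (fun t' => ψx x t') (ψxθ x t) t)
    (hpos : ∀ x t, 0 ≤ ψxθ x t)
    (hsym : ∀ x t, ψ (-x) (-t) = ψ x t)
    (hrange : ∀ x t, ε ≤ |x| → ψx x t = 0)
    (x p θ : Fin N → ℝ)
    (I : Fin n → Finset (Fin N))
    (hdisj : ∀ r s, r ≠ s → Disjoint (I r) (I s))
    (hcover : Finset.univ.biUnion I = Finset.univ)
    (hsep : ∀ r s, r ≠ s → ∀ i ∈ I r, ∀ j ∈ I s, ε < |x i - x j|)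
    (hθ : ∀ i, p i = θ i + ∑ j ∈ Finset.univ.erase i, ψx (x i - x j) (θ i - θ j)) :
    (∀ r : Fin n,
      (∀ i ∈ I r, p i = θ i + ∑ j ∈ (I r).erase i, ψx (x i - x j) (θ i - θ j)) ∧
      ∀ θ' : Fin N → ℝ,
        (∀ i ∈ I r, p i = θ' i + ∑ j ∈ (I r).erase i, ψx (x i - x j) (θ' i - θ' j)) →
        ∀ i ∈ I r, θ' i = θ i) ∧
    (∀ (a : ℕ) (θI : Fin n → Fin N → ℝ),
      (∀ r : Fin n, ∀ i ∈ I r,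
        p i = θI r i + ∑ j ∈ (I r).erase i, ψx (x i - x j) (θI r i - θI r j)) →
      ∑ i, (θ i ^ a - p i ^ a) = ∑ r : Fin n, ∑ i ∈ I r, (θI r i ^ a - p i ^ a)) := by
  classical
  -- ψx is monotone in its second argument
  have hmono : ∀ d : ℝ, Monotone (fun t => ψx d t) := by
    intro d
    have hdiff : ∀ t, HasDerivAt (fun t' => ψx d t') (ψxθ d t) t := hψxθ d
    exact monotone_of_deriv_nonneg (fun t => (hdiff t).differentiableAt)
      (fun t => by rw [(hdiff t).deriv]; exact hpos d t)
  -- interactions between different blocks vanish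
  have hzero : ∀ r : Fin n, ∀ i ∈ I r, ∀ j, j ∉ I r → ∀ t, ψx (x i - x j) t = 0 := by
    intro r i hi j hj t
    have hj' : j ∈ Finset.univ.biUnion I := hcover ▸ Finset.mem_univ j
    obtain ⟨s, -, hjs⟩ := Finset.mem_biUnion.mp hj'
    have hrs : r ≠ s := fun h => hj (h ▸ hjs)
    exact hrange _ _ (le_of_lt (hsep r s hrs i hi j hjs))
  -- the sum over all particles restricts to the block
  have hrestr : ∀ r : Fin n, ∀ i ∈ I r, ∀ φ : Fin N → ℝ,
      ∑ j ∈ (I r).erase i, ψx (x i - x j) (φ i - φ j)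
        = ∑ j ∈ Finset.univ.erase i, ψx (x i - x j) (φ i - φ j) := by
    intro r i hi φ
    refine Finset.sum_subset (Finset.erase_subset_erase i (Finset.subset_univ _)) ?_
    intro j hj hj'
    have hjr : j ∉ I r := fun h => hj' (Finset.mem_erase.mpr ⟨(Finset.mem_erase.mp hj).1, h⟩)
    exact hzero r i hi j hjr _
  -- θ solves each restricted system
  have hsol : ∀ r : Fin n, ∀ i ∈ I r,
      p i = θ i + ∑ j ∈ (I r).erase i, ψx (x i - x j) (θ i - θ j) := by
    intro r i hi
    rw [hrestr r i hi θ]; exact hθ i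
  -- comparison lemma: any two solutions of the restricted system coincide (≤ direction)
  have key : ∀ r : Fin n, ∀ θ₁ θ₂ : Fin N → ℝ,
      (∀ i ∈ I r, p i = θ₁ i + ∑ j ∈ (I r).erase i, ψx (x i - x j) (θ₁ i - θ₁ j)) →
      (∀ i ∈ I r, p i = θ₂ i + ∑ j ∈ (I r).erase i, ψx (x i - x j) (θ₂ i - θ₂ j)) →
      ∀ i ∈ I r, θ₁ i ≤ θ₂ i := by
    intro r θ₁ θ₂ h1 h2 i hi
    obtain ⟨i0, hi0, hmax⟩ := (I r).exists_max_image (fun j => θ₁ j - θ₂ j) ⟨i, hi⟩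
    have hle : θ₁ i0 - θ₂ i0 ≤ 0 := by
      have e1 := h1 i0 hi0
      have e2 := h2 i0 hi0
      have hsumle : ∑ j ∈ (I r).erase i0, ψx (x i0 - x j) (θ₂ i0 - θ₂ j)
          ≤ ∑ j ∈ (I r).erase i0, ψx (x i0 - x j) (θ₁ i0 - θ₁ j) := by
        refine Finset.sum_le_sum ?_
        intro j hj
        have hjr := Finset.mem_of_mem_erase hj
        have := hmax j hjr
        exact hmono (x i0 - x j) (by linarith)
      linarith
    have := hmax i hi
    linarith
  have huniq : ∀ r : Fin n, ∀ θ' : Fin N → ℝ,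
      (∀ i ∈ I r, p i = θ' i + ∑ j ∈ (I r).erase i, ψx (x i - x j) (θ' i - θ' j)) →
      ∀ i ∈ I r, θ' i = θ i := by
    intro r θ' h' i hi
    exact le_antisymm (key r θ' θ h' (hsol r) i hi) (key r θ θ' (hsol r) h' i hi)
  refine ⟨fun r => ⟨hsol r, huniq r⟩, ?_⟩
  intro a θI hθI
  have hsum : ∑ i, (θ i ^ a - p i ^ a) = ∑ r : Fin n, ∑ i ∈ I r, (θ i ^ a - p i ^ a) := by
    rw [← hcover]
    exact Finset.sum_biUnion (fun r _ s _ hrs => hdisj r s hrs)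
  rw [hsum]
  refine Finset.sum_congr rfl fun r _ => Finset.sum_congr rfl fun i hi => ?_
  rw [huniq r (θI r) (hθI r) i hi]
end

section
/- Let Θ : ℝ^{2N} → ℝ^N be the C¹ map assigning to (x,p) the unique solution θ of p_i = θ_i + Σ_{j≠i} ψ_x(x_i−x_j, θ_i−θ_j). For (x,p) ∈ ℝ^{2N} write θ = Θ(x,p) and define the N×N matrix A by A_{ij} = δ_{ij}(1 + Σ_{k≠i} ψ_{xθ}(x_i−x_k, θ_i−θ_k)) − (1−δ_{ij}) ψ_{xθ}(x_i−x_j, θ_i−θ_j). Then A is invertible and the Jacobian of Θ in the momentum variables is its inverse: ∂Θ_i/∂p_j (x,p) = (A^{−1})_{ij} for all i,j. -/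
/-!
Differentiating the defining relation `pᵢ = Θᵢ + ∑_{k≠i} ψ_x(xᵢ−x_k, Θᵢ−Θ_k)` in `pⱼ` (chain rule
through `θ ↦ ψ_x(·, θ)`, whose derivative is `ψ_{xθ}`) gives `δᵢⱼ = ∑ₖ Aᵢₖ ∂Θₖ/∂pⱼ`, i.e. the
Jacobian is a right inverse of `A`. A square matrix with a right inverse is invertible, with that
right inverse as its inverse.
-/

open Finset

section GaudinMatrix

variable {R ι : Type*} [CommRing R] [Fintype ι] [DecidableEq ι]

def gaudinMatrix (c : ι → ι → R) : Matrix ι ι R :=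
  Matrix.of fun i j => if i = j then 1 + ∑ k ∈ univ.erase i, c i k else -c i j

theorem gaudinMatrix_mul_apply (c : ι → ι → R) (B : Matrix ι ι R) (i j : ι) :
    (gaudinMatrix c * B) i j = B i j + ∑ k ∈ univ.erase i, c i k * (B i j - B k j) := by
  have hdiag : gaudinMatrix c i i = 1 + ∑ k ∈ univ.erase i, c i k := if_pos rfl
  have hoff : ∀ k ∈ univ.erase i, gaudinMatrix c i k * B k j = -(c i k * B k j) := fun k hk => by
    rw [gaudinMatrix, Matrix.of_apply, if_neg (ne_of_mem_erase hk).symm, neg_mul]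
  rw [Matrix.mul_apply, ← add_sum_erase _ _ (mem_univ i), hdiag, sum_congr rfl hoff]
  simp only [mul_sub, sum_sub_distrib, sum_neg_distrib, add_mul, sum_mul]
  ring

end GaudinMatrix

section ImplicitJacobian

variable {𝕜 E ι : Type*} [NontriviallyNormedField 𝕜] [NormedAddCommGroup E] [NormedSpace 𝕜 E]

theorem HasFDerivAt.add_sum_comp_sub {θ : E → ι → 𝕜} {L : ι → E →L[𝕜] 𝕜} {p : E}
    (hθ : ∀ i, HasFDerivAt (fun q => θ q i) (L i) p) (s : Finset ι) (i : ι) {φ : ι → 𝕜 → 𝕜}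
    {c : ι → 𝕜} (hφ : ∀ k ∈ s, HasDerivAt (φ k) (c k) (θ p i - θ p k)) :
    HasFDerivAt (fun q => θ q i + ∑ k ∈ s, φ k (θ q i - θ q k))
      (L i + ∑ k ∈ s, c k • (L i - L k)) p :=
  (hθ i).add <| HasFDerivAt.fun_sum fun k hk => (hφ k hk).comp_hasFDerivAt p ((hθ i).sub (hθ k))

variable [Fintype ι] [DecidableEq ι]

theorem gaudinMatrix_mul_jacobian_eq_one {θ : (ι → 𝕜) → ι → 𝕜} {p : ι → 𝕜}
    (hθ : ∀ i, DifferentiableAt 𝕜 (fun q => θ q i) p) {φ : ι → ι → 𝕜 → 𝕜} {c : ι → ι → 𝕜}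
    (hφ : ∀ i k, HasDerivAt (φ i k) (c i k) (θ p i - θ p k))
    (hsolve : ∀ q i, q i = θ q i + ∑ k ∈ univ.erase i, φ i k (θ q i - θ q k)) :
    gaudinMatrix c * Matrix.of (fun i j => fderiv 𝕜 (fun q => θ q i) p (Pi.single j 1)) = 1 := by
  ext i j
  have hsolve_i : (fun q => θ q i + ∑ k ∈ univ.erase i, φ i k (θ q i - θ q k)) = fun q => q i :=
    funext fun q => (hsolve q i).symm
  have hderiv := (HasFDerivAt.add_sum_comp_sub (fun i => (hθ i).hasFDerivAt) _ i
    fun k _ => hφ i k).unique (hsolve_i ▸ hasFDerivAt_apply i p)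
  have hcol := congrArg (· (Pi.single j 1)) hderiv
  simp only [add_apply, _root_.sum_apply, smul_apply, sub_apply, ContinuousLinearMap.proj_apply,
    smul_eq_mul, Pi.single_apply] at hcol
  rw [gaudinMatrix_mul_apply, Matrix.one_apply]
  simpa only [Matrix.of_apply, eq_comm (a := i)] using hcol

end ImplicitJacobian

theorem stmt14_general (N : ℕ)
    (ψx ψxθ : ℝ → ℝ → ℝ)
    (hψxθ : ∀ x t, HasDerivAt (fun t' => ψx x t') (ψxθ x t) t)
    (Θ : (Fin N → ℝ) × (Fin N → ℝ) → Fin N → ℝ)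
    (hΘC1 : ContDiff ℝ 1 Θ)
    (hΘ : ∀ (q : (Fin N → ℝ) × (Fin N → ℝ)) (i : Fin N),
      q.2 i = Θ q i + ∑ j ∈ Finset.univ.erase i,
        ψx (q.1 i - q.1 j) (Θ q i - Θ q j))
    (x p : Fin N → ℝ)
    (A : Matrix (Fin N) (Fin N) ℝ)
    (hA : ∀ i j, A i j =
      if i = j then
        1 + ∑ k ∈ Finset.univ.erase i, ψxθ (x i - x k) (Θ (x, p) i - Θ (x, p) k)
      else -ψxθ (x i - x j) (Θ (x, p) i - Θ (x, p) j)) :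
    IsUnit A.det ∧
    ∀ i j, fderiv ℝ (fun p' => Θ (x, p') i) p (Pi.single j 1) = A⁻¹ i j := by
  have hdiff : ∀ i, DifferentiableAt ℝ (fun p' => Θ (x, p') i) p := fun i =>
    ((contDiff_pi.mp hΘC1 i).comp (contDiff_const.prodMk contDiff_id)).differentiable
      one_ne_zero p
  have hright := gaudinMatrix_mul_jacobian_eq_one hdiff (fun i k => hψxθ (x i - x k) _)
    fun q i => hΘ (x, q) i
  rw [← show A = gaudinMatrix _ from Matrix.ext hA] at hright
  exact ⟨Matrix.isUnit_det_of_right_inverse hright,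
    fun i j => by rw [Matrix.inv_eq_right_inv hright, Matrix.of_apply]⟩

/-- The Jacobian of the asymptotic momenta in the momentum variables is the inverse of
the Gaudin-type matrix `A`: `∂Θᵢ/∂pⱼ(x,p) = (A⁻¹)ᵢⱼ`, where
`Aᵢⱼ = δᵢⱼ(1 + ∑_{k≠i} ψ_{xθ}(xᵢ−x_k, θᵢ−θ_k)) − (1−δᵢⱼ) ψ_{xθ}(xᵢ−xⱼ, θᵢ−θⱼ)`. -/
theorem stmt14 (N : ℕ) (ε : ℝ) (hε : 0 < ε)
    (ψ ψx ψθ ψxθ : ℝ → ℝ → ℝ)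
    (hC2 : ContDiff ℝ 2 (fun q : ℝ × ℝ => ψ q.1 q.2))
    (hψx : ∀ x t, HasDerivAt (fun x' => ψ x' t) (ψx x t) x)
    (hψθ : ∀ x t, HasDerivAt (fun t' => ψ x t') (ψθ x t) t)
    (hψxθ : ∀ x t, HasDerivAt (fun t' => ψx x t') (ψxθ x t) t)
    (hpos : ∀ x t, 0 ≤ ψxθ x t)
    (hsym : ∀ x t, ψ (-x) (-t) = ψ x t)
    (hrange : ∀ x t, ε ≤ |x| → ψx x t = 0)
    (Θ : (Fin N → ℝ) × (Fin N → ℝ) → Fin N → ℝ)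
    (hΘC1 : ContDiff ℝ 1 Θ)
    (hΘ : ∀ (q : (Fin N → ℝ) × (Fin N → ℝ)) (i : Fin N),
      q.2 i = Θ q i + ∑ j ∈ Finset.univ.erase i,
        ψx (q.1 i - q.1 j) (Θ q i - Θ q j))
    (x p : Fin N → ℝ)
    (A : Matrix (Fin N) (Fin N) ℝ)
    (hA : ∀ i j, A i j =
      if i = j then
        1 + ∑ k ∈ Finset.univ.erase i, ψxθ (x i - x k) (Θ (x, p) i - Θ (x, p) k)
      else -ψxθ (x i - x j) (Θ (x, p) i - Θ (x, p) j)) :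
    IsUnit A.det ∧
    ∀ i j, fderiv ℝ (fun p' => Θ (x, p') i) p (Pi.single j 1) = A⁻¹ i j :=
  stmt14_general N ψx ψxθ hψxθ Θ hΘC1 hΘ x p A hA
end

section
/- Let φ : ℝ → [0,∞) be measurable with φ_tot := ∫_ℝ φ < ∞, let β : ℝ → ℝ, and let B > 0 be such that D := B·φ_tot/(2π) < 1. Suppose ε₁, ε₂ : ℝ → ℝ are measurable functions such that e^{−ε_k(θ)} ≤ B for all θ and k = 1,2, and both satisfy the thermodynamic Bethe ansatz equation ε_k(θ) = β(θ) − (1/(2π)) ∫_ℝ φ(θ−θ') e^{−ε_k(θ')} dθ' for all θ ∈ ℝ. Then ε₁ = ε₂ identically. Moreover, since D < 1, any such solution satisfies e^{−ε(θ)} φ_tot ≤ B φ_tot < 2π for all θ. -/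
open MeasureTheory

private lemma tba_lip {B u v : ℝ} (hB : 0 ≤ B) (hu : Real.exp (-u) ≤ B)
    (hv : Real.exp (-v) ≤ B) :
    |Real.exp (-u) - Real.exp (-v)| ≤ B * |u - v| := by
  wlog h : v ≤ u with H
  · rw [abs_sub_comm, abs_sub_comm u v]
    exact H hB hv hu (le_of_not_ge h)
  have h1 : Real.exp (-u) ≤ Real.exp (-v) := Real.exp_le_exp.2 (by linarith)
  rw [abs_of_nonpos (by linarith), abs_of_nonneg (by linarith)]
  have key : Real.exp (-v) - Real.exp (-u)
      = Real.exp (-v) * (1 - Real.exp (-(u - v))) := by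
    rw [mul_sub, mul_one, ← Real.exp_add]; ring_nf
  have h2 : 1 - Real.exp (-(u - v)) ≤ u - v := by
    have := Real.add_one_le_exp (-(u - v)); linarith
  have h3 : 0 ≤ 1 - Real.exp (-(u - v)) := by
    have : Real.exp (-(u - v)) ≤ 1 := Real.exp_le_one_iff.2 (by linarith)
    linarith
  have h4 : Real.exp (-v) * (1 - Real.exp (-(u - v))) ≤ B * (u - v) :=
    mul_le_mul hv h2 h3 hB
  linarith

/-- Uniqueness of the solution of the thermodynamic Bethe ansatz equation with
Maxwell–Boltzmann statistics: if `D = B·φ_tot/(2π) < 1` then any two solutions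
`ε₁, ε₂` of `ε(θ) = β(θ) − (2π)⁻¹ ∫ φ(θ−θ') e^{−ε(θ')} dθ'` with `e^{−ε_k} ≤ B`
coincide; moreover `e^{−ε(θ)} φ_tot ≤ B φ_tot < 2π`. -/
theorem stmt19 (φ : ℝ → ℝ)
    (hφmeas : Measurable φ) (hφnn : ∀ u, 0 ≤ φ u) (hφint : Integrable φ)
    (φtot : ℝ) (hφtot : φtot = ∫ u : ℝ, φ u)
    (β : ℝ → ℝ) (B : ℝ) (hB : 0 < B)
    (hD : B * φtot / (2 * Real.pi) < 1)
    (ε₁ ε₂ : ℝ → ℝ)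
    (hm1 : Measurable ε₁) (hm2 : Measurable ε₂)
    (hb1 : ∀ t, Real.exp (-ε₁ t) ≤ B)
    (hb2 : ∀ t, Real.exp (-ε₂ t) ≤ B)
    (heq1 : ∀ t, ε₁ t = β t - (1 / (2 * Real.pi)) *
      ∫ t' : ℝ, φ (t - t') * Real.exp (-ε₁ t'))
    (heq2 : ∀ t, ε₂ t = β t - (1 / (2 * Real.pi)) *
      ∫ t' : ℝ, φ (t - t') * Real.exp (-ε₂ t')) :
    ε₁ = ε₂ ∧
    (∀ t, Real.exp (-ε₁ t) * φtot ≤ B * φtot) ∧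
    B * φtot < 2 * Real.pi := by
  have hπ : (0 : ℝ) < 2 * Real.pi := by positivity
  have hφtotnn : 0 ≤ φtot := hφtot ▸ integral_nonneg hφnn
  refine ⟨?_, fun t => mul_le_mul_of_nonneg_right (hb1 t) hφtotnn,
    (div_lt_one hπ).1 hD⟩
  -- integrability facts
  have hint : ∀ (ε : ℝ → ℝ), Measurable ε → (∀ s, Real.exp (-ε s) ≤ B) → ∀ t : ℝ,
      Integrable (fun t' => φ (t - t') * Real.exp (-ε t')) := by
    intro ε hm hb t
    have h := Integrable.bdd_mul (c := B) ((hφint.comp_sub_left t))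
      (Real.measurable_exp.comp hm.neg).aestronglyMeasurable
      (by filter_upwards with s
          simpa [Real.norm_eq_abs, Function.comp, abs_of_pos (Real.exp_pos (-ε s))] using hb s)
    exact h.congr (by filter_upwards with s; simp [Function.comp, mul_comm])
  have hi1 := hint ε₁ hm1 hb1
  have hi2 := hint ε₂ hm2 hb2
  -- the difference function and its sup
  set δ : ℝ → ℝ := fun t => |ε₁ t - ε₂ t| with hδ
  have hbdd : BddAbove (Set.range δ) := by
    refine ⟨(1 / (2 * Real.pi)) * (2 * B * φtot), ?_⟩
    rintro _ ⟨t, rfl⟩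
    have e1 : ε₁ t - ε₂ t = (1 / (2 * Real.pi)) *
        ((∫ t' : ℝ, φ (t - t') * Real.exp (-ε₂ t')) -
         (∫ t' : ℝ, φ (t - t') * Real.exp (-ε₁ t'))) := by
      rw [heq1 t, heq2 t]; ring
    have hIb : ∀ (ε : ℝ → ℝ), (∀ s, Real.exp (-ε s) ≤ B) →
        (∀ s, (0:ℝ) ≤ φ (t - s) * Real.exp (-ε s)) ∧
        (∫ t' : ℝ, φ (t - t') * Real.exp (-ε t')) ≤ B * φtot := by
      intro ε hb
      constructor
      · intro s; exact mul_nonneg (hφnn _) (Real.exp_pos _).le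
      · calc (∫ t' : ℝ, φ (t - t') * Real.exp (-ε t'))
            ≤ ∫ t' : ℝ, φ (t - t') * B := by
              refine integral_mono_of_nonneg ?_ ((hφint.comp_sub_left t).mul_const B) ?_
              · filter_upwards with s
                exact mul_nonneg (hφnn _) (Real.exp_pos _).le
              · filter_upwards with s
                exact mul_le_mul_of_nonneg_left (hb s) (hφnn _)
          _ = B * φtot := by
              rw [integral_mul_const, integral_sub_left_eq_self φ volume t, hφtot]
              exact mul_comm _ _
    obtain ⟨hnn1, hub1⟩ := hIb ε₁ hb1
    obtain ⟨hnn2, hub2⟩ := hIb ε₂ hb2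
    have hl1 : 0 ≤ (∫ t' : ℝ, φ (t - t') * Real.exp (-ε₁ t')) :=
      integral_nonneg hnn1
    have hl2 : 0 ≤ (∫ t' : ℝ, φ (t - t') * Real.exp (-ε₂ t')) :=
      integral_nonneg hnn2
    show |ε₁ t - ε₂ t| ≤ _
    rw [e1, abs_mul, abs_of_pos (by positivity : (0:ℝ) < 1 / (2 * Real.pi))]
    have : |(∫ t' : ℝ, φ (t - t') * Real.exp (-ε₂ t')) -
        (∫ t' : ℝ, φ (t - t') * Real.exp (-ε₁ t'))| ≤ 2 * B * φtot := by
      rw [abs_sub_le_iff]; constructor <;> nlinarith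
    exact mul_le_mul_of_nonneg_left this (by positivity)
  set M : ℝ := ⨆ t, δ t with hM
  have hδM : ∀ t, δ t ≤ M := fun t => le_ciSup hbdd t
  have hMnn : 0 ≤ M := le_trans (abs_nonneg _) (hδM 0)
  -- key contraction estimate
  have hkey : ∀ t, δ t ≤ (B * φtot / (2 * Real.pi)) * M := by
    intro t
    have e1 : ε₁ t - ε₂ t = (1 / (2 * Real.pi)) *
        ∫ t' : ℝ, φ (t - t') * Real.exp (-ε₂ t') - φ (t - t') * Real.exp (-ε₁ t') := by
      rw [integral_sub (hi2 t) (hi1 t), heq1 t, heq2 t]; ring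
    have habs : |∫ t' : ℝ, φ (t - t') * Real.exp (-ε₂ t') - φ (t - t') * Real.exp (-ε₁ t')|
        ≤ B * M * φtot := by
      have hib : Integrable (fun t' => φ (t - t') * Real.exp (-ε₂ t')
          - φ (t - t') * Real.exp (-ε₁ t')) := (hi2 t).sub (hi1 t)
      calc |∫ t' : ℝ, φ (t - t') * Real.exp (-ε₂ t') - φ (t - t') * Real.exp (-ε₁ t')|
          ≤ ∫ t' : ℝ, |φ (t - t') * Real.exp (-ε₂ t') - φ (t - t') * Real.exp (-ε₁ t')| := by
            simpa [Real.norm_eq_abs] using norm_integral_le_integral_norm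
              (fun t' => φ (t - t') * Real.exp (-ε₂ t') - φ (t - t') * Real.exp (-ε₁ t'))
        _ ≤ ∫ t' : ℝ, φ (t - t') * (B * M) := by
            refine integral_mono_of_nonneg (by filter_upwards with s; positivity)
              ((hφint.comp_sub_left t).mul_const _) ?_
            filter_upwards with s
            have : φ (t - s) * Real.exp (-ε₂ s) - φ (t - s) * Real.exp (-ε₁ s)
                = φ (t - s) * (Real.exp (-ε₂ s) - Real.exp (-ε₁ s)) := by ring
            rw [this, abs_mul, abs_of_nonneg (hφnn _)]
            refine mul_le_mul_of_nonneg_left ?_ (hφnn _)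
            calc |Real.exp (-ε₂ s) - Real.exp (-ε₁ s)| ≤ B * |ε₂ s - ε₁ s| :=
                  tba_lip hB.le (hb2 s) (hb1 s)
              _ ≤ B * M := by
                  refine mul_le_mul_of_nonneg_left ?_ hB.le
                  rw [abs_sub_comm]; exact hδM s
        _ = B * M * φtot := by
            rw [integral_mul_const, integral_sub_left_eq_self φ volume t, hφtot]
            ring

    calc δ t = (1 / (2 * Real.pi)) *
        |∫ t' : ℝ, φ (t - t') * Real.exp (-ε₂ t') - φ (t - t') * Real.exp (-ε₁ t')| := by
          show |ε₁ t - ε₂ t| = _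
          rw [e1, abs_mul, abs_of_pos (by positivity : (0:ℝ) < 1 / (2 * Real.pi))]
      _ ≤ (1 / (2 * Real.pi)) * (B * M * φtot) :=
          mul_le_mul_of_nonneg_left habs (by positivity)
      _ = (B * φtot / (2 * Real.pi)) * M := by ring
  have hMle : M ≤ (B * φtot / (2 * Real.pi)) * M := ciSup_le hkey
  have hM0 : M = 0 := by nlinarith
  funext t
  have h1 : δ t ≤ 0 := hM0 ▸ hδM t
  have := abs_nonneg (ε₁ t - ε₂ t)
  have : |ε₁ t - ε₂ t| = 0 := le_antisymm h1 this
  linarith [abs_eq_zero.1 this, sub_eq_zero.1 (abs_eq_zero.1 this)]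
end
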